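/- arXiv:1409.6961 — 7 statements merged into one kernel-verified Lean document; each statement's English description precedes it below -/
import Mathlib

section
/- Let q be a power of a prime, m a positive integer, and N a positive divisor of q - 1 such that N is coprime to Q = (q^m - 1)/(q - 1). Then the number of N-free elements ξ ∈ F_{q^m} with Tr_{F_{q^m}/F_q}(ξ) = 0 is Z_{q,m,N}(0) = (φ(N)/N)·(q^{m-1} - 1). -/
open scoped BigOperators
open scoped Classical

/-- The canonical additive character of a finite field `F` of characteristic `p`:
`z ↦ exp(2πi·Tr_{F/F_p}(z)/p)`. -/
noncomputable def canChar (p : ℕ) (F : Type) [Field F] [Fintype F] [CharP F p] : F → ℂ :=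
  fun z => Complex.exp (2 * Real.pi * Complex.I *
    (((@Algebra.trace (ZMod p) F _ _ (ZMod.algebra F p)) z).val : ℂ) / (p : ℂ))

/-- The Gaussian period `η_k^{(d, #L)}` attached to a generator `α` of `Lˣ`:
the sum of `χ` over the cyclotomic class `α^k⟨α^d⟩`. -/
noncomputable def gaussPeriod (p : ℕ) (L : Type) [Field L] [Fintype L] [CharP L p]
    (α : Lˣ) (d : ℕ) (k : ℤ) : ℂ :=
  ∑ x ∈ Finset.univ.filter (fun x : Lˣ => ∃ i : ℕ, x = α ^ k * (α ^ d) ^ i),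
    canChar p L (x : L)

/-- `Δ_k(N) = ∑_{d ∣ N} μ(d)·η_k^{(d, #L)}`. -/
noncomputable def DeltaSum (p : ℕ) (L : Type) [Field L] [Fintype L] [CharP L p]
    (α : Lˣ) (N : ℕ) (k : ℤ) : ℂ :=
  ∑ d ∈ N.divisors, ((ArithmeticFunction.moebius d : ℤ) : ℂ) * gaussPeriod p L α d k

/-- `ξ` is `N`-free (w.r.t. the fixed generator `α`): `ξ = α^k` for some `k` coprime to `N`. -/
def IsNFree {G : Type} [Group G] (α ξ : G) (N : ℕ) : Prop :=
  ∃ k : ℕ, Nat.Coprime k N ∧ ξ = α ^ k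

/-- `Z_{q,m,N}(c)`: the number of `N`-free elements of `Lˣ` with trace (to `K`) equal to `c`. -/
noncomputable def Zcount (K L : Type) [Field K] [Field L] [Algebra K L]
    (α : Lˣ) (N : ℕ) (c : K) : ℕ :=
  {ξ : Lˣ | IsNFree α ξ N ∧ Algebra.trace K L (ξ : L) = c}.ncard

/-- `P_{q,m,N}(c)`: the number of elements of `Lˣ` of multiplicative order exactly `N`
with trace (to `K`) equal to `c`. -/
noncomputable def Pcount (K L : Type) [Field K] [Field L] [Algebra K L]
    (N : ℕ) (c : K) : ℕ :=
  {ξ : Lˣ | orderOf ξ = N ∧ Algebra.trace K L (ξ : L) = c}.ncard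

/-- The radical of `n`: the product of the distinct prime factors of `n`. -/
def Rad (n : ℕ) : ℕ := ∏ ℓ ∈ n.primeFactors, ℓ

/-- `f_k(N, c, Δ) = ∑_{i=0}^{q-2} conj(χ_q(β^i·c))·Δ_{Qi+k}(N)`, where `β ∈ K` corresponds
to `α^Q` (a generator of `Kˣ`). -/
noncomputable def fsum (p : ℕ) (K L : Type) [Field K] [Fintype K] [CharP K p]
    [Field L] [Fintype L] [CharP L p]
    (α : Lˣ) (β : K) (q Q N : ℕ) (c : K) (k : ℤ) : ℂ :=
  ∑ i ∈ Finset.range (q - 1),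
    (starRingEnd ℂ) (canChar p K (β ^ i * c)) * DeltaSum p L α N ((Q * i : ℕ) + k)

/-! The trace-zero units of `L` form a set stable under multiplication by `Kˣ`. Reading the
exponent of the generator `α` modulo `N` is a homomorphism `Lˣ → ℤ/N`, and it maps `Kˣ` onto
`ℤ/N` because `Kˣ` contains `α ^ Q = N_{L/K}(α)` and `Q` is a unit modulo `N`. Translating by
`Kˣ` therefore permutes the fibres of this homomorphism on the `q ^ (m - 1) - 1` trace-zero
units, so all `N` fibres have the same size; the `N`-free elements are those over the `φ(N)`
units of `ℤ/N`. -/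

open Finset

section FiberCount

variable {G A : Type*} [Group G] [Group A] [DecidableEq A] (f : G →* A) (S : Finset G)
  (H : Subgroup G)

theorem card_filter_fiber_le (hS : ∀ h ∈ H, ∀ x ∈ S, h * x ∈ S)
    (hH : ∀ a, ∃ h ∈ H, f h = a) (a b : A) :
    #(S.filter (f · = a)) ≤ #(S.filter (f · = b)) := by
  obtain ⟨h, hh, hfh⟩ := hH (b * a⁻¹)
  refine card_le_card_of_injOn (h * ·) (fun x hx => ?_) (fun x _ y _ => mul_left_cancel)
  simp only [coe_filter, Set.mem_ofPred_eq] at hx ⊢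
  exact ⟨hS h hh x hx.1, by rw [map_mul, hfh, hx.2, inv_mul_cancel_right]⟩

theorem card_filter_fiber_eq (hS : ∀ h ∈ H, ∀ x ∈ S, h * x ∈ S)
    (hH : ∀ a, ∃ h ∈ H, f h = a) (a b : A) :
    #(S.filter (f · = a)) = #(S.filter (f · = b)) :=
  (card_filter_fiber_le f S H hS hH a b).antisymm (card_filter_fiber_le f S H hS hH b a)

theorem card_filter_mem_mul_card [Fintype A] (hS : ∀ h ∈ H, ∀ x ∈ S, h * x ∈ S)
    (hH : ∀ a, ∃ h ∈ H, f h = a) (U : Finset A) :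
    #(S.filter (f · ∈ U)) * Fintype.card A = #U * #S := by
  have hfiber a := card_filter_fiber_eq f S H hS hH a 1
  have hU : #(S.filter (f · ∈ U)) = #U * #(S.filter (f · = 1)) := by
    rw [card_eq_sum_card_fiberwise (s := S.filter (f · ∈ U)) (t := U)
      (fun x hx => (mem_filter.mp hx).2), ← smul_eq_mul, ← sum_const]
    refine sum_congr rfl fun a ha => ?_
    rw [filter_filter, ← hfiber a]
    congr 1
    exact filter_congr fun x _ => ⟨And.right, fun hx => ⟨hx ▸ ha, hx⟩⟩
  have hcardS : #S = Fintype.card A * #(S.filter (f · = 1)) := by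
    rw [card_eq_sum_card_fiberwise (t := univ) (fun x _ => mem_coe.mpr (mem_univ (f x)))]
    simp [hfiber]
  rw [hU, hcardS]; ring

end FiberCount

section Residue

variable {G : Type} [Group G] {g : G} (hg : ∀ x, x ∈ Subgroup.zpowers g) {N : ℕ}
  (hN : N ∣ Nat.card G)

noncomputable def zpowResidueHom : G →* Multiplicative (ZMod N) :=
  (ZMod.castHom hN (ZMod N)).toAddMonoidHom.toMultiplicative.comp
    (zmodMulEquivOfGenerator hg rfl).symm.toMonoidHom

theorem zpowResidueHom_pow (k : ℕ) :
    zpowResidueHom hg hN (g ^ k) = Multiplicative.ofAdd (k : ZMod N) := by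
  rw [← zpow_natCast]
  simp [zpowResidueHom]

theorem isNFree_iff_isUnit_zpowResidueHom [Finite G] (ξ : G) :
    IsNFree g ξ N ↔ IsUnit (Multiplicative.toAdd (zpowResidueHom hg hN ξ)) := by
  constructor
  · rintro ⟨k, hk, rfl⟩
    rwa [zpowResidueHom_pow, toAdd_ofAdd, ZMod.isUnit_iff_coprime]
  · obtain ⟨k, rfl⟩ := mem_powers_iff_mem_zpowers.mpr (hg ξ)
    rw [zpowResidueHom_pow, toAdd_ofAdd, ZMod.isUnit_iff_coprime]
    exact fun hk => ⟨k, hk, rfl⟩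

end Residue

theorem exists_mem_map_eq_of_isUnit {G : Type*} [Group G] {N : ℕ}
    (f : G →* Multiplicative (ZMod N)) {H : Subgroup G} {h : G} (hh : h ∈ H)
    (hu : IsUnit (Multiplicative.toAdd (f h))) (a : Multiplicative (ZMod N)) :
    ∃ x ∈ H, f x = a := by
  obtain ⟨u, hu⟩ := hu
  refine ⟨h ^ ((Multiplicative.toAdd a * ↑u⁻¹ : ZMod N).cast : ℤ), zpow_mem hh _, ?_⟩
  rw [map_zpow, ← ofAdd_toAdd (f h ^ _), toAdd_zpow, ← hu, zsmul_eq_mul,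
    ZMod.intCast_zmod_cast, Units.inv_mul_cancel_right, ofAdd_toAdd]

theorem unitsMap_algebraMap_mul_mem_filter_trace_eq_zero {K L : Type*} [Field K] [Field L]
    [Fintype L] [Algebra K L] {h ξ : Lˣ}
    (hh : h ∈ (Units.map (algebraMap K L : K →* L)).range)
    (hξ : ξ ∈ univ.filter fun ξ : Lˣ => Algebra.trace K L ξ = 0) :
    h * ξ ∈ univ.filter fun ξ : Lˣ => Algebra.trace K L ξ = 0 := by
  obtain ⟨c, rfl⟩ := hh
  simp_all [← Algebra.smul_def]

section FiniteField

variable (K L : Type*) [Field K] [Fintype K] [Field L] [Fintype L] [Algebra K L]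

theorem card_ker_trace_eq_pow :
    Fintype.card (LinearMap.ker (Algebra.trace K L)) =
      Fintype.card K ^ (Module.finrank K L - 1) := by
  have hrank := LinearMap.finrank_range_add_finrank_ker (Algebra.trace K L)
  rw [LinearMap.range_eq_top.mpr (Algebra.trace_surjective K L), finrank_top,
    Module.finrank_self] at hrank
  rw [Module.card_eq_pow_finrank (K := K)]
  congr 1
  omega

theorem card_filter_units_trace_eq_zero :
    #(univ.filter fun ξ : Lˣ => Algebra.trace K L ξ = 0) =
      Fintype.card K ^ (Module.finrank K L - 1) - 1 := by
  have hval : (univ.filter fun ξ : Lˣ => Algebra.trace K L ξ = 0).map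
      ⟨Units.val, Units.val_injective⟩ =
        (univ.filter fun x : L => Algebra.trace K L x = 0).erase 0 := by
    ext x
    simp only [mem_map, mem_filter, mem_univ, true_and, mem_erase, Function.Embedding.coeFn_mk]
    exact ⟨fun ⟨ξ, hξ, hx⟩ => hx ▸ ⟨ξ.ne_zero, hξ⟩, fun ⟨hx, hx0⟩ => ⟨Units.mk0 x hx, hx0, rfl⟩⟩
  rw [← card_map, hval, card_erase_of_mem (by simp), ← card_ker_trace_eq_pow K L,
    ← Fintype.card_subtype]
  rfl

theorem pow_mem_range_unitsMap_algebraMap (ξ : Lˣ) :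
    ξ ^ ((Fintype.card L - 1) / (Fintype.card K - 1)) ∈
      (Units.map (algebraMap K L : K →* L)).range :=
  ⟨Units.map (Algebra.norm K : L →* K) ξ, Units.ext <| by
    simp [FiniteField.algebraMap_norm_eq_pow, Nat.card_eq_fintype_card]⟩

end FiniteField

theorem card_filter_isUnit_toAdd (N : ℕ) [NeZero N] :
    #(univ.filter fun a : Multiplicative (ZMod N) => IsUnit a.toAdd) = N.totient := by
  rw [← ZMod.card_units_eq_totient, ← card_univ (α := (ZMod N)ˣ)]
  refine (card_bij (fun (u : (ZMod N)ˣ) _ => Multiplicative.ofAdd (u : ZMod N))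
    (fun u _ => by simp)
    (fun u _ v _ h => Units.ext h) fun a ha => ?_).symm
  obtain ⟨u, hu⟩ := (mem_filter.mp ha).2
  exact ⟨u, mem_univ _, hu⟩

theorem Zcount_zero_mul_eq (K L : Type) [Field K] [Fintype K] [Field L] [Fintype L]
    [Algebra K L] {α : Lˣ} (hα : ∀ x : Lˣ, x ∈ Subgroup.zpowers α) {N : ℕ}
    (hN : N ∣ Nat.card Lˣ) (hNQ : N.Coprime ((Fintype.card L - 1) / (Fintype.card K - 1))) :
    Zcount K L α N 0 * N = N.totient * (Fintype.card K ^ (Module.finrank K L - 1) - 1) := by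
  have : NeZero N := ⟨(Nat.pos_of_dvd_of_pos hN Nat.card_pos).ne'⟩
  set f := zpowResidueHom hα hN
  set S := univ.filter fun ξ : Lˣ => Algebra.trace K L ξ = 0
  set H := (Units.map (algebraMap K L : K →* L)).range
  set U := univ.filter fun a : Multiplicative (ZMod N) => IsUnit a.toAdd
  have hS : ∀ h ∈ H, ∀ ξ ∈ S, h * ξ ∈ S := fun _ hh _ hξ =>
    unitsMap_algebraMap_mul_mem_filter_trace_eq_zero hh hξ
  have hH : ∀ a, ∃ h ∈ H, f h = a := by
    refine exists_mem_map_eq_of_isUnit f (pow_mem_range_unitsMap_algebraMap K L α) ?_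
    rw [zpowResidueHom_pow, toAdd_ofAdd, ZMod.isUnit_iff_coprime]
    exact hNQ.symm
  have hZ : Zcount K L α N 0 = #(S.filter (f · ∈ U)) := by
    rw [Zcount, Set.ncard_eq_toFinset_card']
    congr 1
    ext ξ
    simp [S, U, f, isNFree_iff_isUnit_zpowResidueHom hα hN, and_comm]
  have hcount := card_filter_mem_mul_card f S H hS hH U
  rwa [← hZ, card_filter_units_trace_eq_zero, card_filter_isUnit_toAdd,
    Fintype.card_multiplicative, ZMod.card] at hcount

theorem stmt_1_general (m q Q N : ℕ) (hQ : Q = (q ^ m - 1) / (q - 1))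
    (K L : Type) [Field K] [Fintype K] [Field L] [Fintype L] [Algebra K L]
    (hK : Fintype.card K = q) (hL : Fintype.card L = q ^ m)
    (α : Lˣ) (hα : ∀ x : Lˣ, x ∈ Subgroup.zpowers α)
    (hN : N ∣ q - 1) (hNQ : Nat.Coprime N Q) :
    (Zcount K L α N (0 : K) : ℚ) =
      ((Nat.totient N : ℚ) / (N : ℚ)) * ((q : ℚ) ^ (m - 1) - 1) := by
  have hq : 1 < q := hK ▸ Fintype.one_lt_card
  have hrank : Module.finrank K L = m :=
    Nat.pow_right_injective hq (by simp only [← hK, ← Module.card_eq_pow_finrank, hL])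
  have hNcard : N ∣ Nat.card Lˣ := hN.trans <| by
    rw [Nat.card_units, Nat.card_eq_fintype_card, hL]
    simpa using Nat.sub_dvd_pow_sub_pow q 1 m
  have hcount := Zcount_zero_mul_eq K L hα hNcard (by rwa [hK, hL, ← hQ])
  rw [hK, hrank] at hcount
  have hN0 : (N : ℚ) ≠ 0 := by exact_mod_cast (Nat.pos_of_dvd_of_pos hNcard Nat.card_pos).ne'
  have hqm : 1 ≤ q ^ (m - 1) := Nat.one_le_pow _ _ (by omega)
  have hcountℚ : (Zcount K L α N 0 : ℚ) * N = N.totient * ((q : ℚ) ^ (m - 1) - 1) := by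
    exact_mod_cast hcount
  field_simp
  linarith

/-- `N ∣ q-1` coprime to `Q` gives `Z_{q,m,N}(0) = (φ(N)/N)(q^{m-1} - 1)`. -/
theorem stmt_1 (p s m q Q N : ℕ) [Fact p.Prime] (hs : 0 < s) (hm : 0 < m)
    (hq : q = p ^ s) (hQ : Q = (q ^ m - 1) / (q - 1))
    (K L : Type) [Field K] [Fintype K] [Field L] [Fintype L] [Algebra K L]
    (hK : Fintype.card K = q) (hL : Fintype.card L = q ^ m)
    (α : Lˣ) (hα : ∀ x : Lˣ, x ∈ Subgroup.zpowers α)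
    (hN : N ∣ q - 1) (hNQ : Nat.Coprime N Q) :
    (Zcount K L α N (0 : K) : ℚ) =
      ((Nat.totient N : ℚ) / (N : ℚ)) * ((q : ℚ) ^ (m - 1) - 1) :=
  stmt_1_general m q Q N hQ K L hK hL α hα hN hNQ
end

section
/- Let q be a power of a prime p and let ℓ be a prime such that Q = (q^ℓ - 1)/(q - 1) is prime. Then the number of primitive elements ξ ∈ F_{q^ℓ} satisfying Tr_{F_{q^ℓ}/F_q}(ξ) = 0 is Z_{q,ℓ,q^ℓ-1}(0) = φ(q^ℓ - 1)/q if ℓ ≠ p, and Z_{q,ℓ,q^ℓ-1}(0) = φ(q^ℓ - 1)/q - φ(q - 1) if ℓ = p. -/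
open scoped BigOperators
open scoped Classical

/-
Write `N = q ^ ℓ - 1 = Q (q - 1)`; as `Q` is a prime exceeding `q - 1`, the two factors are
coprime. The norm of `α` is `α ^ Q`, an element of `Kˣ`, so `Tr (α ^ k)` is a nonzero multiple of
`Tr (α ^ (k % Q))`. By the Chinese remainder theorem, `α ^ k` is then primitive of trace zero iff
`k % Q` is a nonzero residue `r` with `Tr (α ^ r) = 0` and `k % (q - 1)` is a unit, whence
`Z = (A - [Tr 1 = 0]) φ(q - 1)`, where `A` counts the residues `r` mod `Q` with `Tr (α ^ r) = 0`.
Counting all trace-zero units the same way gives `A (q - 1) = q ^ (ℓ - 1) - 1`, i.e. `q A = Q - 1`,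
while `φ(N) = φ(q - 1) (Q - 1)`. Finally `Tr 1 = ℓ` vanishes in `K` exactly when `ℓ = p`.
-/

open Finset

theorem Nat.card_filter_range_mul_of_coprime {m n : ℕ} (h : m.Coprime n)
    (P R : ℕ → Prop) [DecidablePred P] [DecidablePred R] :
    #{k ∈ range (m * n) | P (k % m) ∧ R (k % n)} =
      #{i ∈ range m | P i} * #{j ∈ range n | R j} := by
  rcases eq_or_ne m 0 with rfl | hm
  · simp
  rcases eq_or_ne n 0 with rfl | hn
  · simp
  have crt_mod {i j : ℕ} (hi : i < m) (hj : j < n) :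
      (Nat.chineseRemainder h i j : ℕ) % m = i ∧ (Nat.chineseRemainder h i j : ℕ) % n = j :=
    ⟨((Nat.mod_modEq _ m).trans (Nat.chineseRemainder h i j).2.1).eq_of_lt_of_lt
        (Nat.mod_lt _ (by omega)) hi,
      ((Nat.mod_modEq _ n).trans (Nat.chineseRemainder h i j).2.2).eq_of_lt_of_lt
        (Nat.mod_lt _ (by omega)) hj⟩
  rw [← card_product]
  refine card_nbij' (fun k ↦ (k % m, k % n)) (fun ij ↦ Nat.chineseRemainder h ij.1 ij.2)
    ?_ ?_ ?_ ?_ <;>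
    simp only [Set.MapsTo, Set.LeftInvOn, Set.RightInvOn, mem_coe, mem_filter, mem_product,
      mem_range, Prod.forall, Prod.mk.injEq]
  · exact fun k hk ↦ ⟨⟨Nat.mod_lt _ (by omega), hk.2.1⟩, Nat.mod_lt _ (by omega), hk.2.2⟩
  · intro i j hij
    rw [(crt_mod hij.1.1 hij.2.1).1, (crt_mod hij.1.1 hij.2.1).2]
    exact ⟨Nat.chineseRemainder_lt_mul h i j hm hn, hij.1.2, hij.2.2⟩
  · intro k hk
    exact ((Nat.chineseRemainder_modEq_unique h (Nat.mod_modEq k m).symm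
      (Nat.mod_modEq k n).symm).symm).eq_of_lt_of_lt
        (Nat.chineseRemainder_lt_mul h _ _ hm hn) hk.1
  · exact fun i j hij ↦ crt_mod hij.1.1 hij.2.1

theorem card_filter_range_eq_card_filter_ne_zero_add {Q : ℕ} (hQ : 0 < Q) (P : ℕ → Prop)
    [DecidablePred P] :
    #{r ∈ range Q | P r} = #{r ∈ range Q | r ≠ 0 ∧ P r} + if P 0 then 1 else 0 := by
  obtain ⟨Q, rfl⟩ := Nat.exists_eq_add_of_lt hQ
  rw [card_filter, card_filter, sum_range_succ', sum_range_succ']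
  simp

theorem Nat.coprime_div_sub_one_of_prime {q d : ℕ} (hq : 1 < q)
    (hQ : ((q ^ d - 1) / (q - 1)).Prime) : ((q ^ d - 1) / (q - 1)).Coprime (q - 1) := by
  have hd : 2 ≤ d := by
    by_contra! hd
    interval_cases d <;> simp_all [Nat.div_self, Nat.not_prime_zero, Nat.not_prime_one]
  refine Nat.coprime_of_lt_prime (by omega) ?_ hQ
  rw [Nat.lt_iff_add_one_le, Nat.sub_add_cancel hq.le, Nat.le_div_iff_mul_le (by omega)]
  calc q * (q - 1) ≤ q ^ 2 - 1 := by
        rw [Nat.mul_sub, sq]; exact Nat.sub_le_sub_left (by omega) _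
    _ ≤ q ^ d - 1 := Nat.sub_le_sub_right (Nat.pow_le_pow_right (by omega) hd) 1

theorem mul_eq_sub_one_of_pow_sub_one_eq {q d Q A : ℕ} (hq : 1 < q) (hd : 0 < d)
    (hN : q ^ d - 1 = Q * (q - 1)) (hA : A * (q - 1) = q ^ (d - 1) - 1) :
    (q : ℚ) * A = Q - 1 := by
  obtain ⟨d, rfl⟩ := Nat.exists_eq_add_of_lt hd
  simp only [zero_add, add_tsub_cancel_right] at hA hN
  qify [Nat.one_le_pow _ _ (by omega : 0 < q), hq.le] at hA hN
  refine mul_right_cancel₀ (sub_ne_zero.mpr (Nat.one_lt_cast.mpr hq).ne') ?_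
  linear_combination (q : ℚ) * hA + hN

theorem isNFree_pow_iff {G : Type} [Group G] {α : G} {N : ℕ} (hα : orderOf α = N) (k : ℕ) :
    IsNFree α (α ^ k) N ↔ k.Coprime N := by
  refine ⟨fun ⟨j, hj, hkj⟩ ↦ ?_, fun hk ↦ ⟨k, hk, rfl⟩⟩
  have : k ≡ j [MOD N] := hα ▸ pow_eq_pow_iff_modEq.mp hkj
  rwa [Nat.Coprime, this.gcd_eq]

theorem card_filter_range_pow_eq_card_filter {G : Type*} [Group G] [Fintype G] {α : G}
    (hα : ∀ x : G, x ∈ Subgroup.zpowers α) (P : G → Prop) [DecidablePred P] :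
    #{k ∈ range (Fintype.card G) | P (α ^ k)} = #{x | P x} := by
  have hord : orderOf α = Fintype.card G := by
    rw [orderOf_eq_card_of_forall_mem_zpowers hα, Nat.card_eq_fintype_card]
  refine card_nbij (α ^ ·) (fun k hk ↦ by simpa using (mem_filter.mp hk).2) ?_ ?_
  · intro k hk l hl hkl
    simp only [coe_filter, mem_range] at hk hl
    exact pow_injOn_Iio_orderOf (hord ▸ hk.1) (hord ▸ hl.1) hkl
  · intro x hx
    obtain ⟨k, hk, rfl⟩ := mem_image.mp <| mem_powers_iff_mem_range_orderOf.mp <|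
      (isOfFinOrder_of_finite α).mem_powers_iff_mem_zpowers.mpr (hα x)
    exact ⟨k, by simpa [← hord] using ⟨mem_range.mp hk, (mem_filter.mp hx).2⟩, rfl⟩

theorem trace_one_eq_zero_iff {K L : Type*} [Field K] [Field L] [Algebra K L] :
    Algebra.trace K L 1 = 0 ↔ ringChar K ∣ Module.finrank K L := by
  rw [← map_one (algebraMap K L), Algebra.trace_algebraMap, nsmul_one,
    CharP.cast_eq_zero_iff K (ringChar K)]

theorem zcount_eq_card_filter_range {K L : Type} [Field K] [Field L] [Fintype L] [Algebra K L]
    {α : Lˣ} (hα : ∀ x : Lˣ, x ∈ Subgroup.zpowers α) (c : K) :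
    Zcount K L α (Fintype.card L - 1) c =
      #{k ∈ range (Fintype.card L - 1) |
        k.Coprime (Fintype.card L - 1) ∧ Algebra.trace K L ((α : L) ^ k) = c} := by
  have hord : orderOf α = Fintype.card Lˣ := by
    rw [orderOf_eq_card_of_forall_mem_zpowers hα, Nat.card_eq_fintype_card]
  rw [Zcount, Set.ncard_eq_toFinset_card', Set.toFinset_ofPred, ← Fintype.card_units,
    ← card_filter_range_pow_eq_card_filter hα]
  refine congrArg card (filter_congr fun k _ ↦ ?_)
  rw [isNFree_pow_iff hord, Units.val_pow_eq_pow_val]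

section FiniteFieldExtension

variable {K L : Type} [Field K] [Fintype K] [Field L] [Fintype L] [Algebra K L] {α : Lˣ}

variable (K L) in
theorem card_sub_one_eq_div_mul :
    Fintype.card L - 1 =
      (Fintype.card L - 1) / (Fintype.card K - 1) * (Fintype.card K - 1) := by
  refine (Nat.div_mul_cancel ?_).symm
  simpa [Module.card_eq_pow_finrank (K := K) (V := L)] using
    Nat.sub_dvd_pow_sub_pow (Fintype.card K) 1 (Module.finrank K L)

variable (K L) in
theorem card_units_trace_eq_zero :
    #{x : Lˣ | Algebra.trace K L x = 0} = Fintype.card K ^ (Module.finrank K L - 1) - 1 := by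
  have hker : Fintype.card (LinearMap.ker (Algebra.trace K L)) =
      Fintype.card K ^ (Module.finrank K L - 1) := by
    have := LinearMap.finrank_range_add_finrank_ker (Algebra.trace K L)
    rw [LinearMap.range_eq_top.mpr (Algebra.trace_surjective K L), finrank_top,
      Module.finrank_self] at this
    rw [Module.card_eq_pow_finrank (K := K), ← this, Nat.add_sub_cancel_left]
  have hunits : #{x : Lˣ | Algebra.trace K L x = 0} =
      #(({x | Algebra.trace K L x = 0} : Finset L).erase 0) := by
    refine card_nbij (fun x : Lˣ ↦ (x : L)) ?_ (fun x _ y _ ↦ Units.ext) ?_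
    · intro x hx
      simp only [coe_erase, coe_filter, mem_univ, true_and, Set.mem_sdiff,
        Set.mem_singleton_iff] at hx ⊢
      exact ⟨hx, x.ne_zero⟩
    · intro x hx
      simp only [coe_erase, coe_filter, mem_univ, true_and, Set.mem_sdiff,
        Set.mem_singleton_iff] at hx
      exact ⟨Units.mk0 x hx.2, by simpa using hx.1, rfl⟩
  rw [hunits, card_erase_of_mem (by simp), ← hker, Fintype.card_subtype]
  rfl

theorem trace_pow_eq_zero_iff_pow_mod {x : L} (hx : x ≠ 0) (k : ℕ) :
    Algebra.trace K L (x ^ k) = 0 ↔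
      Algebra.trace K L (x ^ (k % ((Fintype.card L - 1) / (Fintype.card K - 1)))) = 0 := by
  set Q := (Fintype.card L - 1) / (Fintype.card K - 1)
  have hnorm : algebraMap K L (Algebra.norm K x) = x ^ Q := by
    simpa only [Nat.card_eq_fintype_card] using
      FiniteField.algebraMap_norm_eq_pow (K := K) (K' := L) (x := x)
  have hsplit : x ^ k = algebraMap K L (Algebra.norm K x ^ (k / Q)) * x ^ (k % Q) := by
    rw [map_pow, hnorm, ← pow_mul, ← pow_add, Nat.div_add_mod]
  rw [hsplit, ← Algebra.smul_def, map_smul, smul_eq_mul, mul_eq_zero,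
    or_iff_right (pow_ne_zero _ (Algebra.norm_ne_zero_iff.mpr hx))]

theorem div_card_sub_one_coprime
    (hQ : ((Fintype.card L - 1) / (Fintype.card K - 1)).Prime) :
    ((Fintype.card L - 1) / (Fintype.card K - 1)).Coprime (Fintype.card K - 1) := by
  rw [Module.card_eq_pow_finrank (K := K) (V := L)] at hQ ⊢
  exact Nat.coprime_div_sub_one_of_prime Fintype.one_lt_card hQ

theorem card_filter_range_trace_pow_eq_zero_mul (hα : ∀ x : Lˣ, x ∈ Subgroup.zpowers α)
    (hcop : ((Fintype.card L - 1) / (Fintype.card K - 1)).Coprime (Fintype.card K - 1)) :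
    #{r ∈ range ((Fintype.card L - 1) / (Fintype.card K - 1)) |
        Algebra.trace K L ((α : L) ^ r) = 0} * (Fintype.card K - 1) =
      Fintype.card K ^ (Module.finrank K L - 1) - 1 := by
  have hper := trace_pow_eq_zero_iff_pow_mod (K := K) α.ne_zero
  have hN := card_sub_one_eq_div_mul K L
  rw [← card_units_trace_eq_zero K L, ← card_filter_range_pow_eq_card_filter hα,
    Fintype.card_units]
  generalize (Fintype.card L - 1) / (Fintype.card K - 1) = Q at hcop hper hN ⊢
  have key := Nat.card_filter_range_mul_of_coprime hcop
    (fun r ↦ Algebra.trace K L ((α : L) ^ r) = 0) (fun _ ↦ True)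
  simp only [and_true, filter_true, card_range] at key
  rw [← key, hN]
  refine congrArg card (filter_congr fun k _ ↦ ?_)
  rw [Units.val_pow_eq_pow_val]
  exact (hper k).symm

theorem zcount_zero_eq_card_filter_mul_totient (hα : ∀ x : Lˣ, x ∈ Subgroup.zpowers α)
    (hQ : ((Fintype.card L - 1) / (Fintype.card K - 1)).Prime) :
    Zcount K L α (Fintype.card L - 1) 0 =
      #{r ∈ range ((Fintype.card L - 1) / (Fintype.card K - 1)) |
        r ≠ 0 ∧ Algebra.trace K L ((α : L) ^ r) = 0} * (Fintype.card K - 1).totient := by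
  have hcop := div_card_sub_one_coprime hQ
  have hper := trace_pow_eq_zero_iff_pow_mod (K := K) α.ne_zero
  have hN := card_sub_one_eq_div_mul K L
  generalize (Fintype.card L - 1) / (Fintype.card K - 1) = Q at hQ hcop hper hN ⊢
  rw [zcount_eq_card_filter_range hα, hN, Nat.totient_eq_card_coprime,
    ← Nat.card_filter_range_mul_of_coprime hcop]
  refine congrArg card (filter_congr fun k _ ↦ ?_)
  have hcopQ : k.Coprime Q ↔ k % Q ≠ 0 := by
    rw [Nat.coprime_comm, hQ.coprime_iff_not_dvd, Nat.dvd_iff_mod_eq_zero]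
  rw [hper, Nat.coprime_mul_iff_right, hcopQ, Nat.coprime_comm (n := Fintype.card K - 1),
    ZMod.coprime_mod_iff_coprime]
  tauto

theorem zcount_zero_eq_of_prime (hα : ∀ x : Lˣ, x ∈ Subgroup.zpowers α)
    (hQ : ((Fintype.card L - 1) / (Fintype.card K - 1)).Prime) :
    (Zcount K L α (Fintype.card L - 1) 0 : ℚ) =
      ((Fintype.card L - 1).totient : ℚ) / Fintype.card K -
        if Algebra.trace K L 1 = 0 then ((Fintype.card K - 1).totient : ℚ) else 0 := by
  have hcop := div_card_sub_one_coprime hQ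
  have hA := card_filter_range_trace_pow_eq_zero_mul hα hcop
  have hsplit := card_filter_range_eq_card_filter_ne_zero_add hQ.pos
    (fun r ↦ Algebra.trace K L ((α : L) ^ r) = 0)
  have hN := card_sub_one_eq_div_mul K L
  have hd : 0 < Module.finrank K L := Module.finrank_pos
  have hq : 1 < Fintype.card K := Fintype.one_lt_card
  simp only [pow_zero] at hsplit
  rw [zcount_zero_eq_card_filter_mul_totient hα hQ]
  generalize (Fintype.card L - 1) / (Fintype.card K - 1) = Q at *
  rw [hN, Nat.totient_mul hcop, Nat.totient_prime hQ]
  rw [Module.card_eq_pow_finrank (K := K) (V := L)] at hN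
  generalize Module.finrank K L = d at *
  generalize Fintype.card K = q at *
  have hqA := mul_eq_sub_one_of_pow_sub_one_eq hq hd hN hA
  have hq0 : (q : ℚ) ≠ 0 := by positivity
  rw [hsplit] at hqA
  split_ifs at hqA ⊢ <;> push_cast [hQ.one_le] at hqA ⊢ <;> field_simp <;>
    linear_combination ((q - 1).totient : ℚ) * hqA

end FiniteFieldExtension

theorem stmt_2_general (p s ℓ q : ℕ) [Fact p.Prime] (hq : q = p ^ s)
    (hl : ℓ.Prime) (hQprime : Nat.Prime ((q ^ ℓ - 1) / (q - 1)))
    (K L : Type) [Field K] [Fintype K] [Field L] [Fintype L] [Algebra K L]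
    (hK : Fintype.card K = q) (hL : Fintype.card L = q ^ ℓ)
    (α : Lˣ) (hα : ∀ x : Lˣ, x ∈ Subgroup.zpowers α) :
    (ℓ ≠ p → (Zcount K L α (q ^ ℓ - 1) (0 : K) : ℚ) =
        (Nat.totient (q ^ ℓ - 1) : ℚ) / (q : ℚ)) ∧
    (ℓ = p → (Zcount K L α (q ^ ℓ - 1) (0 : K) : ℚ) =
        (Nat.totient (q ^ ℓ - 1) : ℚ) / (q : ℚ) - (Nat.totient (q - 1) : ℚ)) := by
  have hchar : ringChar K = p := by
    have hr := CharP.char_is_prime K (ringChar K)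
    have hdvd : ringChar K ∣ p ^ s := hq ▸ hK ▸ ringChar.dvd (FiniteField.cast_card_eq_zero K)
    exact (Nat.prime_dvd_prime_iff_eq hr Fact.out).mp (hr.dvd_of_dvd_pow hdvd)
  have hfinrank : Module.finrank K L = ℓ := by
    rw [Module.card_eq_pow_finrank (K := K), hK] at hL
    exact Nat.pow_right_injective (hK ▸ Fintype.one_lt_card) hL
  have htrace : Algebra.trace K L 1 = 0 ↔ ℓ = p := by
    rw [trace_one_eq_zero_iff, hchar, hfinrank, Nat.prime_dvd_prime_iff_eq Fact.out hl, eq_comm]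
  have h := zcount_zero_eq_of_prime hα (by rwa [hK, hL])
  rw [hK, hL] at h
  exact ⟨fun hne ↦ by simpa [htrace, hne] using h, fun heq ↦ by simpa [htrace, heq] using h⟩

/-- number of primitive elements of trace zero when `Q = (q^ℓ-1)/(q-1)` is prime. -/
theorem stmt_2 (p s ℓ q : ℕ) [Fact p.Prime] (hs : 0 < s) (hq : q = p ^ s)
    (hl : ℓ.Prime) (hQprime : Nat.Prime ((q ^ ℓ - 1) / (q - 1)))
    (K L : Type) [Field K] [Fintype K] [Field L] [Fintype L] [Algebra K L]
    (hK : Fintype.card K = q) (hL : Fintype.card L = q ^ ℓ)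
    (α : Lˣ) (hα : ∀ x : Lˣ, x ∈ Subgroup.zpowers α) :
    (ℓ ≠ p → (Zcount K L α (q ^ ℓ - 1) (0 : K) : ℚ) =
        (Nat.totient (q ^ ℓ - 1) : ℚ) / (q : ℚ)) ∧
    (ℓ = p → (Zcount K L α (q ^ ℓ - 1) (0 : K) : ℚ) =
        (Nat.totient (q ^ ℓ - 1) : ℚ) / (q : ℚ) - (Nat.totient (q - 1) : ℚ)) :=
  stmt_2_general p s ℓ q hq hl hQprime K L hK hL α hα
end

section
/- Let q = p^s be a power of a prime p and let m > 1 be an integer. Then there exists a positive integer j with p^j ≡ -1 (mod Rad((q^m - 1)/(q - 1))) if and only if m = 2, or q = p is a Mersenne prime and m = 4. In the latter case (q = p Mersenne, m = 4), the congruence p^j ≡ -1 (mod Rad((p^4 - 1)/(p - 1))) holds precisely for the integers j = 2k with k ≥ 1 odd. -/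
/-!
If `p ^ j ≡ -1` modulo `Rad N`, `N = (q ^ m - 1) / (q - 1) = ∑_{i<m} q ^ i`, then every odd prime
`ℓ ∣ N` satisfies `v₂(ord_ℓ p) = v₂(j) + 1 ≥ 1`. An odd prime factor of `(p ^ s) ^ n + 1` has
`v₂(ord_ℓ p) = v₂(s) + v₂(n) + 1`, while one of `∑_{i<r} (p ^ s) ^ i` with `r` odd has
`v₂(ord_ℓ p) ≤ v₂(s)`. So `m` has no odd divisor `r > 1`: for `s` odd the bound is `0`, and for
`q = Q ^ 2` the odd factors `∑_{i<r} Q ^ i` and `(Q ^ r + 1) / (Q + 1)` of `∑_{i<r} q ^ i` give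
different valuations. For `m = 2 ^ γ`, the factors `q + 1`, `q ^ 2 + 1`, `q ^ 4 + 1` of `N` force
`γ = 2` and `q + 1 = 2 ^ t`, whence `q = p` is a Mersenne prime. Conversely `q ≡ -1 (mod q + 1)`,
and for a Mersenne prime `p` every prime factor of `N = (p + 1)(p ^ 2 + 1)` divides `p ^ 2 + 1`.
-/

open scoped BigOperators
open scoped Classical

open Finset

section GeomSum

variable {R : Type*} [CommSemiring R]

theorem geom_sum_mul_geom_sum_pow (x : R) (d k : ℕ) :
    (∑ i ∈ range d, x ^ i) * ∑ i ∈ range k, (x ^ d) ^ i = ∑ i ∈ range (d * k), x ^ i := by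
  induction k with
  | zero => simp
  | succ k ih =>
    rw [sum_range_succ, mul_add, ih, Nat.mul_succ, sum_range_add, ← pow_mul, sum_mul]
    simp only [pow_add, mul_comm]

theorem geom_sum_dvd_geom_sum {d m : ℕ} (x : R) (h : d ∣ m) :
    ∑ i ∈ range d, x ^ i ∣ ∑ i ∈ range m, x ^ i := by
  obtain ⟨k, rfl⟩ := h
  exact Dvd.intro _ (geom_sum_mul_geom_sum_pow x d k)

theorem pow_add_one_dvd_geom_sum {d m : ℕ} (x : R) (h : 2 * d ∣ m) :
    x ^ d + 1 ∣ ∑ i ∈ range m, x ^ i := by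
  have hsplit := geom_sum_mul_geom_sum_pow x d 2
  rw [geom_sum_two] at hsplit
  exact (Dvd.intro_left _ hsplit).trans (geom_sum_dvd_geom_sum x (by rwa [mul_comm]))

end GeomSum

theorem Nat.odd_geom_sum (x : ℕ) {n : ℕ} (hn : Odd n) : Odd (∑ i ∈ range n, x ^ i) := by
  rw [← ZMod.natCast_eq_one_iff_odd, Nat.cast_sum]
  simp only [Nat.cast_pow]
  rcases x.even_or_odd with hx | hx
  · simp [ZMod.natCast_eq_zero_iff_even.2 hx, zero_geom_sum, hn.pos.ne']
  · simpa [ZMod.natCast_eq_one_iff_odd.2 hx, ZMod.natCast_eq_one_iff_odd] using hn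

theorem Nat.geom_sum_mul_pow_add_one_div {r : ℕ} (x : ℕ) (hr : Odd r) :
    (∑ i ∈ range r, x ^ i) * ((x ^ r + 1) / (x + 1)) = ∑ i ∈ range r, (x ^ 2) ^ i := by
  have hdvd : x + 1 ∣ x ^ r + 1 := by simpa using hr.nat_add_dvd_pow_add_pow x 1
  apply Nat.eq_of_mul_eq_mul_left (by omega : 0 < x + 1)
  have h2r := geom_sum_mul_geom_sum_pow x r 2
  have hr2 := geom_sum_mul_geom_sum_pow x 2 r
  rw [geom_sum_two] at h2r hr2
  rw [mul_left_comm, Nat.mul_div_cancel' hdvd, h2r, mul_comm r 2, ← hr2]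

theorem Nat.odd_pow_add_one_div {r : ℕ} (x : ℕ) (hr : Odd r) : Odd ((x ^ r + 1) / (x + 1)) := by
  have h := Nat.odd_geom_sum (x ^ 2) hr
  rw [← Nat.geom_sum_mul_pow_add_one_div x hr] at h
  exact Nat.Odd.of_mul_right h

theorem Nat.one_lt_geom_sum {x n : ℕ} (hx : 0 < x) (hn : 2 ≤ n) : 1 < ∑ i ∈ range n, x ^ i := by
  calc 1 < x + 1 := by omega
    _ = ∑ i ∈ range 2, x ^ i := geom_sum_two.symm
    _ ≤ _ := sum_le_sum_of_subset (range_subset_range.2 hn)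

theorem Nat.factorization_two_eq_succ_of_dvd_two_mul {d n : ℕ} (hn : n ≠ 0) (h : d ∣ 2 * n)
    (h' : ¬ d ∣ n) : d.factorization 2 = n.factorization 2 + 1 := by
  have hd : d ≠ 0 := by rintro rfl; simp_all
  have hle := (Nat.factorization_le_iff_dvd hd (by positivity)).2 h
  rw [Nat.factorization_mul two_ne_zero hn, Nat.prime_two.factorization] at hle
  refine le_antisymm (by simpa [add_comm] using hle 2)
    (Nat.succ_le_of_lt (lt_of_not_ge fun h2 => h' ?_))
  refine (Nat.factorization_le_iff_dvd hd hn).1 fun r => ?_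
  rcases eq_or_ne r 2 with rfl | hr
  · exact h2
  · simpa [Finsupp.single_apply, Ne.symm hr] using hle r

section OrderOf

variable {M : Type*} [Monoid M] {x : M} {n : ℕ}

theorem factorization_two_orderOf_le (hn : n ≠ 0) (h : x ^ n = 1) :
    (orderOf x).factorization 2 ≤ n.factorization 2 :=
  (Nat.factorization_le_iff_dvd (orderOf_pos_iff.2 (isOfFinOrder_iff_pow_eq_one.2
    ⟨n, Nat.pos_of_ne_zero hn, h⟩)).ne' hn).2 (orderOf_dvd_of_pow_eq_one h) 2

theorem factorization_two_orderOf_of_pow_eq_neg_one [HasDistribNeg M] (h1 : (-1 : M) ≠ 1)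
    (hn : n ≠ 0) (h : x ^ n = -1) : (orderOf x).factorization 2 = n.factorization 2 + 1 := by
  refine Nat.factorization_two_eq_succ_of_dvd_two_mul hn (orderOf_dvd_of_pow_eq_one ?_)
    fun hdvd => h1 ?_
  · rw [mul_comm, pow_mul, h, neg_one_sq]
  · rw [← h, orderOf_dvd_iff_pow_eq_one.1 hdvd]

end OrderOf

theorem ZMod.natCast_pow_eq_one_of_dvd_geom_sum {k x n : ℕ}
    (h : k ∣ ∑ i ∈ range n, x ^ i) : (x : ZMod k) ^ n = 1 := by
  have h0 := (ZMod.natCast_eq_zero_iff _ k).2 h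
  push_cast at h0
  rw [← sub_eq_zero, ← mul_geom_sum, h0, mul_zero]

theorem ZMod.natCast_pow_eq_neg_one_of_dvd {k x n : ℕ} (h : k ∣ x ^ n + 1) :
    (x : ZMod k) ^ n = -1 := by
  have h0 := (ZMod.natCast_eq_zero_iff _ k).2 h
  push_cast at h0
  exact eq_neg_of_add_eq_zero_left h0

theorem dvd_rad {ℓ n : ℕ} (hn : n ≠ 0) (hℓ : ℓ.Prime) (h : ℓ ∣ n) : ℓ ∣ Rad n :=
  Finset.dvd_prod_of_mem _ (Nat.mem_primeFactors.2 ⟨hℓ, h, hn⟩)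

theorem rad_dvd_of_forall_prime_dvd {n k : ℕ} (h : ∀ ℓ : ℕ, ℓ.Prime → ℓ ∣ n → ℓ ∣ k) :
    Rad n ∣ k :=
  Finset.prod_primes_dvd k (fun _ hℓ => (Nat.prime_of_mem_primeFactors hℓ).prime)
    fun ℓ hℓ => h ℓ (Nat.prime_of_mem_primeFactors hℓ) (Nat.dvd_of_mem_primeFactors hℓ)

theorem Nat.exists_prime_dvd_and_odd_of_odd {n : ℕ} (hn : Odd n) (h1 : n ≠ 1) :
    ∃ ℓ, ℓ.Prime ∧ ℓ ∣ n ∧ Odd ℓ := by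
  refine n.eq_two_pow_or_exists_odd_prime_and_dvd.resolve_left ?_
  rintro ⟨_ | k, rfl⟩
  · exact h1 rfl
  · exact Nat.not_even_iff_odd.2 hn ((Nat.even_pow' k.succ_ne_zero).2 even_two)

theorem Nat.exists_prime_dvd_and_odd_sq_add_one {y : ℕ} (hy : 2 ≤ y) :
    ∃ ℓ, ℓ.Prime ∧ ℓ ∣ y ^ 2 + 1 ∧ Odd ℓ := by
  refine (y ^ 2 + 1).eq_two_pow_or_exists_odd_prime_and_dvd.resolve_left ?_
  rintro ⟨k, hk⟩
  have hy2 : 4 ≤ y ^ 2 := by nlinarith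
  rcases Nat.lt_or_ge k 2 with hk2 | hk2
  · interval_cases k <;> omega
  · have h4 : 4 ∣ y ^ 2 + 1 := hk ▸ pow_dvd_pow 2 hk2
    have hmod : y ^ 2 % 4 = (y % 4) ^ 2 % 4 := Nat.pow_mod y 2 4
    have : y % 4 < 4 := Nat.mod_lt y (by norm_num)
    interval_cases y % 4 <;> omega

theorem Nat.factorization_two_eq_zero_of_odd {n : ℕ} (hn : Odd n) : n.factorization 2 = 0 :=
  Nat.factorization_eq_zero_of_not_dvd hn.not_two_dvd_nat

theorem Nat.exists_odd_eq_two_mul_of_factorization_two_eq_one {j : ℕ} (hj : j ≠ 0)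
    (h : j.factorization 2 = 1) : ∃ k, Odd k ∧ j = 2 * k := by
  obtain ⟨a, k, hk, rfl⟩ := Nat.exists_eq_two_pow_mul_odd hj
  rw [Nat.factorization_mul (by positivity) hk.pos.ne', Finsupp.add_apply,
    Nat.prime_two.factorization_pow, Nat.factorization_two_eq_zero_of_odd hk] at h
  simp only [Finsupp.single_eq_same, add_zero] at h
  exact ⟨k, hk, by rw [h, pow_one]⟩

def TwoAdicOrderEq (p N c : ℕ) : Prop :=
  ∀ ℓ : ℕ, ℓ.Prime → ℓ ∣ N → Odd ℓ → (orderOf (p : ZMod ℓ)).factorization 2 = c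

namespace TwoAdicOrderEq

variable {p N c : ℕ}

theorem of_pow_eq_neg_one {j : ℕ} (hN : N ≠ 0) (hj : j ≠ 0) (h : (p : ZMod (Rad N)) ^ j = -1) :
    TwoAdicOrderEq p N (j.factorization 2 + 1) := by
  intro ℓ hℓ hℓN ho
  have : Fact (2 < ℓ) := ⟨hℓ.two_le.lt_of_ne (by rintro rfl; norm_num at ho)⟩
  have hmod := congrArg (ZMod.castHom (dvd_rad hN hℓ hℓN) (ZMod ℓ)) h
  rw [map_pow, map_natCast, map_neg, map_one] at hmod
  exact factorization_two_orderOf_of_pow_eq_neg_one ZMod.neg_one_ne_one hj hmod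

theorem of_dvd {M : ℕ} (h : TwoAdicOrderEq p N c) (hM : M ∣ N) : TwoAdicOrderEq p M c :=
  fun ℓ hℓ hℓM => h ℓ hℓ (hℓM.trans hM)

variable {ℓ s : ℕ}

theorem eq_of_dvd_pow_add_one {n : ℕ} (h : TwoAdicOrderEq p N c) (hs : s ≠ 0) (hn : n ≠ 0)
    (hℓ : ℓ.Prime) (hℓN : ℓ ∣ N) (hℓd : ℓ ∣ (p ^ s) ^ n + 1) (ho : Odd ℓ) :
    c = s.factorization 2 + n.factorization 2 + 1 := by
  have : Fact (2 < ℓ) := ⟨hℓ.two_le.lt_of_ne (by rintro rfl; norm_num at ho)⟩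
  rw [← pow_mul] at hℓd
  have hv := factorization_two_orderOf_of_pow_eq_neg_one ZMod.neg_one_ne_one
    (mul_ne_zero hs hn) (ZMod.natCast_pow_eq_neg_one_of_dvd hℓd)
  rw [h ℓ hℓ hℓN ho, Nat.factorization_mul hs hn, Finsupp.add_apply] at hv
  exact hv

theorem le_of_dvd_geom_sum {r : ℕ} (h : TwoAdicOrderEq p N c) (hs : s ≠ 0) (hr : Odd r)
    (hℓ : ℓ.Prime) (hℓN : ℓ ∣ N) (hℓd : ℓ ∣ ∑ i ∈ range r, (p ^ s) ^ i) (ho : Odd ℓ) :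
    c ≤ s.factorization 2 := by
  have hpow : (p : ZMod ℓ) ^ (s * r) = 1 := by
    rw [pow_mul]; exact_mod_cast ZMod.natCast_pow_eq_one_of_dvd_geom_sum hℓd
  have hv := factorization_two_orderOf_le (mul_ne_zero hs hr.pos.ne') hpow
  rwa [h ℓ hℓ hℓN ho, Nat.factorization_mul hs hr.pos.ne', Finsupp.add_apply,
    Nat.factorization_two_eq_zero_of_odd hr, add_zero] at hv

theorem eq_of_dvd_pow_two_pow_add_one {γ k : ℕ}
    (h : TwoAdicOrderEq p (∑ i ∈ range (2 ^ γ), (p ^ s) ^ i) c) (hs : s ≠ 0) (hk : k < γ)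
    (hℓ : ℓ.Prime) (hℓd : ℓ ∣ (p ^ s) ^ 2 ^ k + 1) (ho : Odd ℓ) :
    c = s.factorization 2 + k + 1 := by
  have hdvd : 2 * 2 ^ k ∣ 2 ^ γ := by rw [← pow_succ']; exact pow_dvd_pow 2 hk
  have hv := h.eq_of_dvd_pow_add_one hs (by positivity) hℓ
    (hℓd.trans (pow_add_one_dvd_geom_sum _ hdvd)) hℓd ho
  rwa [Nat.prime_two.factorization_pow, Finsupp.single_eq_same] at hv

end TwoAdicOrderEq

theorem not_twoAdicOrderEq_geom_sum_of_odd {p s r c : ℕ} (hp : 1 < p) (hs : s ≠ 0) (hr : Odd r)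
    (hr1 : r ≠ 1) : ¬ TwoAdicOrderEq p (∑ i ∈ range r, (p ^ s) ^ i) (c + 1) := by
  intro h
  have hr2 : 2 ≤ r := by obtain ⟨k, rfl⟩ := hr; omega
  rcases s.even_or_odd with ⟨u, rfl⟩ | hs_odd
  · have hu : u ≠ 0 := by omega
    set Q := p ^ u
    have hQ : 2 ≤ Q := Nat.one_lt_pow hu hp
    have hsplit : (∑ i ∈ range r, Q ^ i) * ((Q ^ r + 1) / (Q + 1)) =
        ∑ i ∈ range r, (p ^ (u + u)) ^ i := by
      rw [Nat.geom_sum_mul_pow_add_one_div Q hr, ← two_mul, mul_comm, pow_mul]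
    -- The odd prime factors of `∑ Q ^ i` and of `(Q ^ r + 1) / (Q + 1)` give different values.
    obtain ⟨ℓ, hℓ, hℓd, ho⟩ := Nat.exists_prime_dvd_and_odd_of_odd (Nat.odd_geom_sum Q hr)
      (Nat.one_lt_geom_sum (by omega) hr2).ne'
    have hle := h.le_of_dvd_geom_sum hu hr hℓ (hℓd.trans (Dvd.intro _ hsplit)) hℓd ho
    have hB1 : (Q ^ r + 1) / (Q + 1) ≠ 1 := fun hB => hr1 <| (Nat.pow_eq_self_iff hQ).1 <|
      Nat.add_right_cancel (Nat.eq_of_dvd_of_div_eq_one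
        (by simpa using hr.nat_add_dvd_pow_add_pow Q 1) hB).symm
    obtain ⟨ℓ', hℓ', hℓ'd, ho'⟩ :=
      Nat.exists_prime_dvd_and_odd_of_odd (Nat.odd_pow_add_one_div Q hr) hB1
    have heq := h.eq_of_dvd_pow_add_one hu hr.pos.ne' hℓ' (hℓ'd.trans (Dvd.intro_left _ hsplit))
      (hℓ'd.trans (Nat.div_dvd_of_dvd (by simpa using hr.nat_add_dvd_pow_add_pow Q 1))) ho'
    rw [Nat.factorization_two_eq_zero_of_odd hr] at heq
    omega
  · obtain ⟨ℓ, hℓ, hℓd, ho⟩ := Nat.exists_prime_dvd_and_odd_of_odd (Nat.odd_geom_sum (p ^ s) hr)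
      (Nat.one_lt_geom_sum (by positivity) hr2).ne'
    have hle := h.le_of_dvd_geom_sum hs hr hℓ hℓd hℓd ho
    rw [Nat.factorization_two_eq_zero_of_odd hs_odd] at hle
    omega

theorem eq_two_and_exists_of_twoAdicOrderEq_geom_sum_two_pow {p s γ c : ℕ} (hp : 1 < p)
    (hs : s ≠ 0) (hγ : 2 ≤ γ) (h : TwoAdicOrderEq p (∑ i ∈ range (2 ^ γ), (p ^ s) ^ i) c) :
    γ = 2 ∧ ∃ t, p ^ s + 1 = 2 ^ t := by
  have hq : 2 ≤ p ^ s := Nat.one_lt_pow hs hp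
  obtain ⟨ℓ, hℓ, hℓd, ho⟩ := Nat.exists_prime_dvd_and_odd_sq_add_one hq
  have hc := h.eq_of_dvd_pow_two_pow_add_one hs (k := 1) (by omega) hℓ (by simpa using hℓd) ho
  refine ⟨le_antisymm (not_lt.1 fun hγ3 => ?_) hγ, ?_⟩
  · obtain ⟨ℓ', hℓ', hℓ'd, ho'⟩ := Nat.exists_prime_dvd_and_odd_sq_add_one (y := (p ^ s) ^ 2)
      (hq.trans (Nat.le_self_pow two_ne_zero _))
    have := h.eq_of_dvd_pow_two_pow_add_one hs (k := 2) hγ3 hℓ'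
      (by rwa [← pow_mul] at hℓ'd) ho'
    omega
  · refine (p ^ s + 1).eq_two_pow_or_exists_odd_prime_and_dvd.resolve_right ?_
    rintro ⟨ℓ', hℓ', hℓ'd, ho'⟩
    have := h.eq_of_dvd_pow_two_pow_add_one hs (k := 0) (by omega) hℓ' (by simpa using hℓ'd) ho'
    omega

theorem Nat.Prime.mersenne_of_pow_add_one_eq_two_pow {p s t : ℕ} (hp : p.Prime) (hs : s ≠ 0)
    (h : p ^ s + 1 = 2 ^ t) : s = 1 ∧ ∃ ℓ : ℕ, ℓ.Prime ∧ p = 2 ^ ℓ - 1 := by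
  have hs1 : s = 1 := by
    rcases s.even_or_odd with ⟨u, rfl⟩ | hs_odd
    · obtain ⟨ℓ, hℓ, hℓd, ho⟩ := Nat.exists_prime_dvd_and_odd_sq_add_one
        (Nat.one_lt_pow (n := u) (by omega) hp.one_lt)
      rw [← pow_mul, mul_two, h] at hℓd
      rw [(Nat.prime_dvd_prime_iff_eq hℓ Nat.prime_two).1 (hℓ.dvd_of_dvd_pow hℓd)] at ho
      norm_num at ho
    · have hdvd : p + 1 ∣ p ^ s + 1 := by simpa using hs_odd.nat_add_dvd_pow_add_pow p 1
      have hB : (p ^ s + 1) / (p + 1) = 1 :=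
        Nat.Coprime.eq_one_of_dvd ((Nat.odd_pow_add_one_div p hs_odd).coprime_two_right.pow_right t)
          (h ▸ Nat.div_dvd_of_dvd hdvd)
      exact (Nat.pow_eq_self_iff hp.one_lt).1
        (Nat.add_right_cancel (Nat.eq_of_dvd_of_div_eq_one hdvd hB).symm)
  subst hs1
  rw [pow_one] at h
  have ht : t ≠ 1 := by rintro rfl; exact hp.one_lt.ne' (by omega)
  have hpt : p = 2 ^ t - 1 := by omega
  exact ⟨rfl, t, (Nat.prime_of_pow_sub_one_prime ht (hpt ▸ hp)).2, hpt⟩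

theorem eq_two_or_mersenne_of_twoAdicOrderEq {p s m c : ℕ} (hp : p.Prime) (hs : s ≠ 0)
    (hm : 1 < m) (h : TwoAdicOrderEq p (∑ i ∈ range m, (p ^ s) ^ i) (c + 1)) :
    m = 2 ∨ (s = 1 ∧ (∃ ℓ : ℕ, ℓ.Prime ∧ p = 2 ^ ℓ - 1) ∧ m = 4) := by
  obtain ⟨γ, r, hr, rfl⟩ := Nat.exists_eq_two_pow_mul_odd (by omega : m ≠ 0)
  rcases eq_or_ne r 1 with rfl | hr1
  · rw [mul_one] at hm h ⊢
    rcases Nat.lt_or_ge γ 2 with hγ | hγ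
    · interval_cases γ <;> simp_all
    obtain ⟨rfl, t, ht⟩ :=
      eq_two_and_exists_of_twoAdicOrderEq_geom_sum_two_pow hp.one_lt hs hγ h
    obtain ⟨hs1, hmersenne⟩ := hp.mersenne_of_pow_add_one_eq_two_pow hs ht
    exact Or.inr ⟨hs1, hmersenne, rfl⟩
  · exact absurd (h.of_dvd (geom_sum_dvd_geom_sum _ (Dvd.intro_left _ rfl)))
      (not_twoAdicOrderEq_geom_sum_of_odd hp.one_lt hs hr hr1)

theorem rad_geom_sum_four_dvd {p t : ℕ} (ht : p + 1 = 2 ^ t) :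
    Rad (∑ i ∈ range 4, p ^ i) ∣ p ^ 2 + 1 := by
  refine rad_dvd_of_forall_prime_dvd fun ℓ hℓ hℓd => ?_
  have hsplit := geom_sum_mul_geom_sum_pow p 2 2
  rw [geom_sum_two, geom_sum_two] at hsplit
  rcases hℓ.dvd_mul.1 (hsplit ▸ hℓd) with h | h
  · rw [ht] at h
    obtain rfl := (Nat.prime_dvd_prime_iff_eq hℓ Nat.prime_two).1 (hℓ.dvd_of_dvd_pow h)
    have hp : ¬ Even p := Nat.even_add_one.1 (even_iff_two_dvd.2 (ht ▸ h))
    exact even_iff_two_dvd.1 (Nat.even_add_one.2 (by rwa [Nat.even_pow' two_ne_zero]))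
  · exact h

theorem exists_odd_eq_two_mul_of_pow_eq_neg_one {p j : ℕ} (hp : 2 ≤ p) (hj : j ≠ 0)
    (h : (p : ZMod (Rad (∑ i ∈ range 4, p ^ i))) ^ j = -1) : ∃ k, Odd k ∧ j = 2 * k := by
  obtain ⟨ℓ, hℓ, hℓd, ho⟩ := Nat.exists_prime_dvd_and_odd_sq_add_one hp
  have hN : ∑ i ∈ range 4, p ^ i ≠ 0 :=
    Nat.ne_zero_of_lt (Nat.one_lt_geom_sum (by omega) (by norm_num))
  have hv := (TwoAdicOrderEq.of_pow_eq_neg_one hN hj h).eq_of_dvd_pow_add_one one_ne_zero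
    two_ne_zero hℓ (hℓd.trans (pow_add_one_dvd_geom_sum p (by norm_num))) (by rwa [pow_one]) ho
  rw [Nat.factorization_one, Nat.prime_two.factorization_self] at hv
  exact Nat.exists_odd_eq_two_mul_of_factorization_two_eq_one hj (by simpa using hv)

/-- the semi-primitive condition modulo `Rad(Q)` holds iff `m = 2` or
`q = p` is a Mersenne prime and `m = 4`; in the latter case exactly for `j = 2k`, `k` odd. -/
theorem stmt_6 (p s m q : ℕ) (hp : p.Prime) (hs : 0 < s) (hm : 1 < m) (hq : q = p ^ s) :
    ((∃ j : ℕ, 0 < j ∧ (p : ZMod (Rad ((q ^ m - 1) / (q - 1)))) ^ j = -1) ↔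
      (m = 2 ∨ (s = 1 ∧ (∃ ℓ : ℕ, ℓ.Prime ∧ p = 2 ^ ℓ - 1) ∧ m = 4))) ∧
    ((∃ ℓ : ℕ, ℓ.Prime ∧ p = 2 ^ ℓ - 1) →
      ∀ j : ℕ, 0 < j →
        ((p : ZMod (Rad ((p ^ 4 - 1) / (p - 1)))) ^ j = -1 ↔
          ∃ k : ℕ, Odd k ∧ j = 2 * k)) := by
  have hq2 : 2 ≤ q := hq ▸ Nat.one_lt_pow hs.ne' hp.one_lt
  have hmersenne {ℓ : ℕ} (hpℓ : p = 2 ^ ℓ - 1) :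
      (p : ZMod (Rad ((p ^ 4 - 1) / (p - 1)))) ^ 2 = -1 := by
    have : 1 ≤ 2 ^ ℓ := Nat.one_le_two_pow
    rw [← Nat.geomSum_eq hp.two_le]
    exact ZMod.natCast_pow_eq_neg_one_of_dvd (rad_geom_sum_four_dvd (t := ℓ) (by omega))
  refine ⟨⟨?_, ?_⟩, ?_⟩
  · rintro ⟨j, hj, hpj⟩
    rw [← Nat.geomSum_eq hq2, hq] at hpj
    have hN := Nat.ne_zero_of_lt (Nat.one_lt_geom_sum (x := q) (by omega) hm)
    exact eq_two_or_mersenne_of_twoAdicOrderEq hp hs.ne' hm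
      (.of_pow_eq_neg_one (hq ▸ hN) hj.ne' hpj)
  · rintro (rfl | ⟨rfl, ⟨ℓ, -, hpℓ⟩, rfl⟩)
    · refine ⟨s, hs, ZMod.natCast_pow_eq_neg_one_of_dvd ?_⟩
      rw [← Nat.geomSum_eq hq2, geom_sum_two, ← hq]
      exact Nat.prod_primeFactors_dvd _
    · exact ⟨2, two_pos, hq ▸ (pow_one p).symm ▸ hmersenne hpℓ⟩
  · rintro ⟨ℓ, -, hpℓ⟩ j hj
    refine ⟨fun h => ?_, fun ⟨k, hk, hjk⟩ => by rw [hjk, pow_mul, hmersenne hpℓ, hk.neg_one_pow]⟩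
    rw [← Nat.geomSum_eq hp.two_le] at h
    exact exists_odd_eq_two_mul_of_pow_eq_neg_one hp.two_le hj.ne' h
end

section
/- Let q be a power of a prime, m a positive integer, and N a positive divisor of q^m - 1 such that every prime divisor of N divides Q = (q^m - 1)/(q - 1). Then for every c ∈ F_q \ {0}, the number of N-free elements ξ ∈ F_{q^m} with Tr_{F_{q^m}/F_q}(ξ) = c is Z_{q,m,N}(c) = ( ((q^m - 1)/N)·φ(N) - Z_{q,m,N}(0) )/(q - 1); in particular this value is the same for all nonzero c ∈ F_q. -/
open scoped BigOperators
open scoped Classical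

/-!
Inside `Lˣ = ⟨α⟩` the subgroup `Kˣ` is `⟨α ^ Q⟩`. Multiplying `α ^ k` by `α ^ (Q * t)` shifts the
exponent by a multiple of `Q`, and since every prime factor of `N` divides `Q`, this preserves
coprimality with `N`. As the trace is `K`-linear, multiplication by `μ ∈ Kˣ` therefore injects the
`N`-free elements of trace `c` into those of trace `μ * c`, so `Z(c)` is the same for all `c ≠ 0`.
Summing over all traces gives `Z(0) + (q - 1) Z(c) = (q ^ m - 1) / N * φ N`, the number of `N`-free
elements of the cyclic group `Lˣ`.
-/

theorem Function.Periodic.count_mul {p : ℕ → Prop} [DecidablePred p] {a : ℕ}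
    (hp : Function.Periodic p a) (c : ℕ) : Nat.count p (c * a) = c * Nat.count p a := by
  induction c with
  | zero => simp
  | succ c ih =>
    have hca : Function.Periodic p (c * a) := by simpa using hp.nat_mul c
    rw [add_mul, one_mul, Nat.count_add, ih, add_mul, one_mul]
    simp only [add_comm (c * a), hca _]

theorem Nat.count_coprime_mul (N c : ℕ) : Nat.count (·.Coprime N) (c * N) = c * N.totient := by
  have hper : Function.Periodic (·.Coprime N) N := fun k => by
    simp only [Nat.coprime_add_self_left]
  rw [hper.count_mul, Nat.totient_eq_card_coprime, Nat.count_eq_card_filter_range]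
  simp only [Nat.coprime_comm]

section NFree

variable {G : Type} [Group G] {α ξ : G} {N : ℕ}

theorem IsNFree.pow_mul {j : ℕ} (hj : ∀ ℓ : ℕ, ℓ.Prime → ℓ ∣ N → ℓ ∣ j)
    (hξ : IsNFree α ξ N) : IsNFree α (α ^ j * ξ) N := by
  obtain ⟨k, hk, rfl⟩ := hξ
  refine ⟨j + k, Nat.coprime_of_dvd fun ℓ hℓ hℓjk hℓN => ?_, (pow_add α j k).symm⟩
  have hℓk : ℓ ∣ k := (Nat.dvd_add_right (hj ℓ hℓ hℓN)).1 hℓjk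
  exact hℓ.one_lt.ne' (Nat.eq_one_of_dvd_coprimes hk hℓk hℓN)

theorem setOf_isNFree_eq_image (hα : IsOfFinOrder α) (hN : N ∣ orderOf α) :
    {ξ : G | IsNFree α ξ N} = (α ^ ·) '' {k : ℕ | k < orderOf α ∧ k.Coprime N} := by
  ext ξ
  constructor
  · rintro ⟨k, hk, rfl⟩
    have hkN : (k % orderOf α).Coprime N := by
      rw [Nat.Coprime, ((Nat.mod_modEq k _).of_dvd hN).gcd_eq]
      exact hk
    exact ⟨k % orderOf α, ⟨Nat.mod_lt _ hα.orderOf_pos, hkN⟩, pow_mod_orderOf α k⟩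
  · rintro ⟨k, ⟨-, hk⟩, rfl⟩
    exact ⟨k, hk, rfl⟩

theorem ncard_setOf_isNFree (hα : IsOfFinOrder α) (hN : N ∣ orderOf α) :
    {ξ : G | IsNFree α ξ N}.ncard = orderOf α / N * N.totient := by
  rw [setOf_isNFree_eq_image hα hN, (pow_injOn_Iio_orderOf.mono fun k hk => hk.1).ncard_image,
    ← Nat.count_coprime_mul, Nat.div_mul_cancel hN, Nat.count_eq_card_filter_range,
    ← Set.ncard_coe_finset]
  congr 1
  ext k
  simp

end NFree

theorem sum_ncard_setOf_and_eq {X Y : Type} [Finite X] [Fintype Y] (P : X → Prop) (f : X → Y) :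
    ∑ y, {x | P x ∧ f x = y}.ncard = {x | P x}.ncard := by
  have := Fintype.ofFinite X
  simp only [Set.ncard_eq_toFinset_card']
  rw [Finset.card_eq_sum_card_fiberwise (f := f) (t := Finset.univ) (fun _ _ => Finset.mem_univ _)]
  congr 1
  ext y
  congr 1
  ext x
  simp

section FiniteField

variable {K L : Type} [Field K] [Fintype K] [Field L] [Fintype L] [Algebra K L]
  {α : Lˣ} {Q N : ℕ}

theorem exists_pow_mul_eq_algebraMap (hα : ∀ x : Lˣ, x ∈ Subgroup.zpowers α)
    (hQ : Q * (Fintype.card K - 1) = Fintype.card Lˣ) {μ : K} (hμ : μ ≠ 0) :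
    ∃ t : ℕ, ((α ^ (Q * t) : Lˣ) : L) = algebraMap K L μ := by
  set u : Lˣ := Units.mk0 (algebraMap K L μ) ((map_ne_zero _).2 hμ)
  have hu : u ^ (Fintype.card K - 1) = 1 := by
    ext
    simp [u, ← map_pow, FiniteField.pow_card_sub_one_eq_one μ hμ]
  obtain ⟨j, hj : α ^ j = u⟩ : u ∈ Submonoid.powers α := mem_powers_iff_mem_zpowers.2 (hα u)
  have hdvd : Q * (Fintype.card K - 1) ∣ j * (Fintype.card K - 1) := by
    rw [hQ, ← Nat.card_eq_fintype_card, ← orderOf_eq_card_of_forall_mem_zpowers hα]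
    exact orderOf_dvd_of_pow_eq_one (by rw [pow_mul, hj, hu])
  obtain ⟨t, rfl⟩ := Nat.dvd_of_mul_dvd_mul_right (Nat.sub_pos_of_lt Fintype.one_lt_card) hdvd
  exact ⟨t, by rw [hj]; rfl⟩

theorem Zcount_le_Zcount_mul (hα : ∀ x : Lˣ, x ∈ Subgroup.zpowers α)
    (hQ : Q * (Fintype.card K - 1) = Fintype.card Lˣ) (hrad : ∀ ℓ : ℕ, ℓ.Prime → ℓ ∣ N → ℓ ∣ Q)
    {μ : K} (hμ : μ ≠ 0) (c : K) : Zcount K L α N c ≤ Zcount K L α N (μ * c) := by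
  obtain ⟨t, ht⟩ := exists_pow_mul_eq_algebraMap hα hQ hμ
  refine Set.ncard_le_ncard_of_injOn (α ^ (Q * t) * ·) ?_ (mul_right_injective _).injOn
  rintro ξ ⟨hξ, htr⟩
  refine ⟨hξ.pow_mul fun ℓ hℓ hℓN => (hrad ℓ hℓ hℓN).mul_right t, ?_⟩
  rw [Units.val_mul, ht, ← Algebra.smul_def, map_smul, htr, smul_eq_mul]

theorem Zcount_eq_of_ne_zero (hα : ∀ x : Lˣ, x ∈ Subgroup.zpowers α)
    (hQ : Q * (Fintype.card K - 1) = Fintype.card Lˣ) (hrad : ∀ ℓ : ℕ, ℓ.Prime → ℓ ∣ N → ℓ ∣ Q)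
    {c c' : K} (hc : c ≠ 0) (hc' : c' ≠ 0) : Zcount K L α N c' = Zcount K L α N c := by
  apply le_antisymm
  · simpa [hc'] using Zcount_le_Zcount_mul (N := N) hα hQ hrad (div_ne_zero hc hc') c'
  · simpa [hc] using Zcount_le_Zcount_mul (N := N) hα hQ hrad (div_ne_zero hc' hc) c

theorem sum_Zcount :
    ∑ c : K, Zcount K L α N c = {ξ : Lˣ | IsNFree α ξ N}.ncard :=
  sum_ncard_setOf_and_eq _ _

end FiniteField

theorem stmt_8_general (m q Q N : ℕ) (hQ : Q = (q ^ m - 1) / (q - 1))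
    (K L : Type) [Field K] [Fintype K] [Field L] [Fintype L] [Algebra K L]
    (hK : Fintype.card K = q) (hL : Fintype.card L = q ^ m)
    (α : Lˣ) (hα : ∀ x : Lˣ, x ∈ Subgroup.zpowers α)
    (hN : N ∣ q ^ m - 1)
    (hrad : ∀ ℓ : ℕ, ℓ.Prime → ℓ ∣ N → ℓ ∣ Q) :
    ∀ c : K, c ≠ 0 →
      (Zcount K L α N c : ℚ) =
        ((((q ^ m - 1) / N : ℕ) : ℚ) * (Nat.totient N : ℚ) -
          (Zcount K L α N (0 : K) : ℚ)) / ((q : ℚ) - 1) := by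
  intro c hc
  have hq : 1 < q := hK ▸ Fintype.one_lt_card
  have hcardL : Fintype.card Lˣ = q ^ m - 1 := by rw [Fintype.card_units, hL]
  have hord : orderOf α = q ^ m - 1 := by
    rw [orderOf_eq_card_of_forall_mem_zpowers hα, Nat.card_eq_fintype_card, hcardL]
  have hQq : Q * (Fintype.card K - 1) = Fintype.card Lˣ := by
    rw [hcardL, hK, hQ]
    exact Nat.div_mul_cancel (by simpa using Nat.sub_dvd_pow_sub_pow q 1 m)
  have hcount : Zcount K L α N 0 + (q - 1) * Zcount K L α N c =
      (q ^ m - 1) / N * N.totient := by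
    rw [← hord, ← ncard_setOf_isNFree (isOfFinOrder_of_finite α) (hord ▸ hN),
      ← sum_Zcount (K := K), ← Finset.add_sum_erase _ _ (Finset.mem_univ 0),
      Finset.sum_congr rfl fun c' hc' =>
        Zcount_eq_of_ne_zero hα hQq hrad hc (Finset.ne_of_mem_erase hc'),
      Finset.sum_const, Finset.card_erase_of_mem (Finset.mem_univ _), Finset.card_univ, hK,
      smul_eq_mul]
  have hq1 : ((q - 1 : ℕ) : ℚ) = q - 1 := by push_cast [hq.le]; ring
  rw [eq_div_iff (by rw [← hq1]; exact_mod_cast (Nat.sub_pos_of_lt hq).ne'), ← hq1,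
    eq_sub_iff_add_eq', mul_comm]
  exact_mod_cast hcount

/-- uniformity of `Z_{q,m,N}(c)` for nonzero `c` when `Rad(N) ∣ Q`. -/
theorem stmt_8 (p s m q Q N : ℕ) [Fact p.Prime] (hs : 0 < s) (hm : 0 < m)
    (hq : q = p ^ s) (hQ : Q = (q ^ m - 1) / (q - 1))
    (K L : Type) [Field K] [Fintype K] [Field L] [Fintype L] [Algebra K L]
    (hK : Fintype.card K = q) (hL : Fintype.card L = q ^ m)
    (α : Lˣ) (hα : ∀ x : Lˣ, x ∈ Subgroup.zpowers α)
    (hN : N ∣ q ^ m - 1)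
    (hrad : ∀ ℓ : ℕ, ℓ.Prime → ℓ ∣ N → ℓ ∣ Q) :
    ∀ c : K, c ≠ 0 →
      (Zcount K L α N c : ℚ) =
        ((((q ^ m - 1) / N : ℕ) : ℚ) * (Nat.totient N : ℚ) -
          (Zcount K L α N (0 : K) : ℚ)) / ((q : ℚ) - 1) :=
  stmt_8_general m q Q N hQ K L hK hL α hα hN hrad
end

section
/- Let q be a power of a prime, m a positive integer, N a positive divisor of q^m - 1, and k an integer. Then Σ_{i=0}^{q-2} η_{Qi+k}^{(N,q^m)} = ((q - 1)·gcd(Q, N)/N)·η_k^{(gcd(Q,N), q^m)}, where Q = (q^m - 1)/(q - 1). -/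
open scoped BigOperators
open scoped Classical

/-!
Write every element as `α ^ t`. It lies in the class `α^(Qi+k)⟨α^N⟩` iff `N ∣ t - k - Qi`.
With `g = gcd(Q, N)`, this congruence in `i` has no solution unless `g ∣ t - k`, and otherwise
becomes a congruence with unit coefficient `Q/g` modulo `N/g`; since `N/g` divides `q - 1`, it
has exactly `(q-1)/(N/g) = (q-1)g/N` solutions in `[0, q-1)`. So the classes `α^(Qi+k)⟨α^N⟩`,
counted with multiplicity, cover `α^k⟨α^g⟩` exactly `(q-1)g/N` times.
-/

open Finset

lemma exists_zpow_eq_zpow_mul_pow_iff {G : Type*} [Group G] {a : G} (ha : IsOfFinOrder a)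
    {d : ℕ} (hd : d ∣ orderOf a) (κ t : ℤ) :
    (∃ i : ℕ, a ^ t = a ^ κ * (a ^ d) ^ i) ↔ (d : ℤ) ∣ t - κ := by
  calc (∃ i : ℕ, a ^ t = a ^ κ * (a ^ d) ^ i)
      ↔ a ^ (t - κ) ∈ Submonoid.powers (a ^ d) := by
        rw [sub_eq_neg_add, zpow_add, zpow_neg, Submonoid.mem_powers_iff]
        simp only [eq_inv_mul_iff_mul_eq, eq_comm]
    _ ↔ ∃ j : ℤ, a ^ (d * j : ℤ) = a ^ (t - κ) := by
        rw [ha.pow.mem_powers_iff_mem_zpowers, Subgroup.mem_zpowers_iff]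
        simp only [zpow_mul, zpow_natCast]
    _ ↔ (d : ℤ) ∣ t - κ := by
        simp only [zpow_eq_zpow_iff_modEq]
        constructor
        · rintro ⟨j, hj⟩
          have h := (Int.natCast_dvd_natCast.2 hd).trans hj.dvd
          simpa using dvd_add h (dvd_mul_right (d : ℤ) j)
        · rintro ⟨j, hj⟩
          exact ⟨j, hj ▸ rfl⟩

lemma card_filter_range_dvd_sub_mul_of_coprime {a M c : ℕ} (hM : 0 < M) (hcop : a.Coprime M)
    (hMc : M ∣ c) (σ : ℤ) :
    #{i ∈ range c | (M : ℤ) ∣ σ - (a * i : ℕ)} = c / M := by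
  have : NeZero M := ⟨hM.ne'⟩
  set u := ZMod.unitOfCoprime a hcop
  have hsol : ∀ i : ℕ,
      (M : ℤ) ∣ σ - (a * i : ℕ) ↔
        i ≡ (((u⁻¹ : (ZMod M)ˣ) : ZMod M) * σ).val [MOD M] := by
    intro i
    rw [← ZMod.natCast_eq_natCast_iff, ZMod.natCast_zmod_val, Units.eq_inv_mul_iff_mul_eq,
      ← ZMod.intCast_eq_intCast_iff_dvd_sub, ZMod.coe_unitOfCoprime]
    push_cast
    rfl
  rw [filter_congr fun i _ => hsol i, ← Nat.count_eq_card_filter_range, Nat.count_modEq_card _ hM,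
    Nat.mod_eq_zero_of_dvd hMc]
  simp

lemma card_filter_range_dvd_sub_mul {a N c : ℕ} (hN : 0 < N) (hNc : N ∣ a * c) (τ : ℤ) :
    #{i ∈ range c | (N : ℤ) ∣ τ - (a * i : ℕ)} =
      if (a.gcd N : ℤ) ∣ τ then c * a.gcd N / N else 0 := by
  set g := a.gcd N
  have hg : 0 < g := Nat.gcd_pos_of_pos_right a hN
  obtain ⟨a', ha⟩ : g ∣ a := Nat.gcd_dvd_left a N
  obtain ⟨M, hNM⟩ : g ∣ N := Nat.gcd_dvd_right a N
  have hcop : a'.Coprime M := by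
    have h := Nat.coprime_div_gcd_div_gcd (m := a) (n := N) hg
    rwa [Nat.div_eq_of_eq_mul_right hg ha, Nat.div_eq_of_eq_mul_right hg hNM] at h
  have hM : 0 < M := Nat.pos_of_mul_pos_left (hNM ▸ hN)
  have hMc : M ∣ c := by
    refine hcop.symm.dvd_of_dvd_mul_left ((Nat.mul_dvd_mul_iff_left hg).mp ?_)
    rwa [← hNM, ← mul_assoc, ← ha]
  split_ifs with hτ
  · obtain ⟨σ, rfl⟩ := hτ
    have hred : ∀ i : ℕ,
        (N : ℤ) ∣ g * σ - (a * i : ℕ) ↔ (M : ℤ) ∣ σ - (a' * i : ℕ) := by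
      intro i
      rw [hNM, ha]
      push_cast
      rw [mul_assoc, ← mul_sub, mul_dvd_mul_iff_left (by exact_mod_cast hg.ne')]
    rw [filter_congr fun i _ => hred i, card_filter_range_dvd_sub_mul_of_coprime hM hcop hMc σ,
      hNM, mul_comm c, Nat.mul_div_mul_left _ _ hg]
  · refine card_eq_zero.mpr (filter_eq_empty_iff.mpr fun i _ hdvd => hτ ?_)
    have hgN : (g : ℤ) ∣ N := Int.natCast_dvd_natCast.mpr (Nat.gcd_dvd_right a N)
    have hga : (g : ℤ) ∣ (a * i : ℕ) :=
      Int.natCast_dvd_natCast.mpr ((Nat.gcd_dvd_left a N).mul_right i)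
    simpa using dvd_add (hgN.trans hdvd) hga

theorem sum_range_sum_filter_exists_zpow_mul_pow {G M : Type*} [Group G] [Fintype G]
    [AddCommMonoid M] {α : G} (hα : ∀ x, x ∈ Subgroup.zpowers α) {a N c : ℕ}
    (hN : N ∣ orderOf α) (hNc : N ∣ a * c) (k : ℤ) (f : G → M) :
    ∑ i ∈ range c, ∑ x ∈ univ.filter
        (fun x => ∃ j : ℕ, x = α ^ (((a * i : ℕ) : ℤ) + k) * (α ^ N) ^ j), f x =
      (c * a.gcd N / N) •
        ∑ x ∈ univ.filter (fun x => ∃ j : ℕ, x = α ^ k * (α ^ a.gcd N) ^ j), f x := by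
  have hα' : IsOfFinOrder α := isOfFinOrder_of_finite α
  have hmult : ∀ x : G,
      #{i ∈ range c | ∃ j : ℕ, x = α ^ (((a * i : ℕ) : ℤ) + k) * (α ^ N) ^ j} =
        if ∃ j : ℕ, x = α ^ k * (α ^ a.gcd N) ^ j then c * a.gcd N / N else 0 := by
    intro x
    obtain ⟨t, rfl⟩ := Subgroup.mem_zpowers_iff.mp (hα x)
    simp only [exists_zpow_eq_zpow_mul_pow_iff hα' hN,
      exists_zpow_eq_zpow_mul_pow_iff hα' ((Nat.gcd_dvd_right a N).trans hN)]
    rw [← card_filter_range_dvd_sub_mul (Nat.pos_of_dvd_of_pos hN hα'.orderOf_pos) hNc (t - k)]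
    simp only [sub_add_eq_sub_sub_swap]
  simp only [sum_filter, smul_sum]
  rw [sum_comm]
  refine sum_congr rfl fun x _ => ?_
  rw [← sum_filter, sum_const, hmult, ite_smul, zero_smul, smul_ite, smul_zero]

theorem stmt_11_general (p m q Q N : ℕ) (k : ℤ)
    (hQ : Q = (q ^ m - 1) / (q - 1))
    (L : Type) [Field L] [Fintype L] [CharP L p] (hL : Fintype.card L = q ^ m)
    (α : Lˣ) (hα : ∀ x : Lˣ, x ∈ Subgroup.zpowers α)
    (hN : N ∣ q ^ m - 1) :
    ∑ i ∈ Finset.range (q - 1), gaussPeriod p L α N (((Q * i : ℕ) : ℤ) + k) =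
      (((q : ℂ) - 1) * (Nat.gcd Q N : ℂ) / (N : ℂ)) *
        gaussPeriod p L α (Nat.gcd Q N) k := by
  have hqm : 1 < q ^ m := hL ▸ Fintype.one_lt_card
  have hq : 1 ≤ q := Nat.pos_of_ne_zero <| by rintro rfl; cases m <;> simp at hqm
  have horder : orderOf α = q ^ m - 1 := by
    rw [orderOf_eq_card_of_forall_mem_zpowers hα, Nat.card_eq_fintype_card, Fintype.card_units, hL]
  have hQq : Q * (q - 1) = q ^ m - 1 := by
    rw [hQ]
    exact Nat.div_mul_cancel (by simpa using Nat.sub_dvd_pow_sub_pow q 1 m)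
  have hN0 : N ≠ 0 := by rintro rfl; omega
  have hNg : N ∣ (q - 1) * Q.gcd N := by
    rw [mul_comm, ← Nat.gcd_mul_right]
    exact Nat.dvd_gcd (hQq ▸ hN) (dvd_mul_right N _)
  unfold gaussPeriod
  rw [sum_range_sum_filter_exists_zpow_mul_pow hα (horder ▸ hN) (hQq ▸ hN), nsmul_eq_mul,
    Nat.cast_div hNg (by exact_mod_cast hN0), Nat.cast_mul, Nat.cast_sub hq, Nat.cast_one]

/-- Ding–Yang sum of Gaussian periods. -/
theorem stmt_11 (p s m q Q N : ℕ) (k : ℤ) [Fact p.Prime] (hs : 0 < s) (hm : 0 < m)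
    (hq : q = p ^ s) (hQ : Q = (q ^ m - 1) / (q - 1))
    (L : Type) [Field L] [Fintype L] [CharP L p] (hL : Fintype.card L = q ^ m)
    (α : Lˣ) (hα : ∀ x : Lˣ, x ∈ Subgroup.zpowers α)
    (hN : N ∣ q ^ m - 1) :
    ∑ i ∈ Finset.range (q - 1), gaussPeriod p L α N (((Q * i : ℕ) : ℤ) + k) =
      (((q : ℂ) - 1) * (Nat.gcd Q N : ℂ) / (N : ℂ)) *
        gaussPeriod p L α (Nat.gcd Q N) k :=
  stmt_11_general p m q Q N k hQ L hL α hα hN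
end

section
/- Let q be a power of a prime, m a positive integer, N a positive divisor of q^m - 1, and k an integer. Then the following three identities hold: (i) Δ_{Nk}(N) = Δ_0(N); (ii) Σ_{i=0}^{N-1} Δ_i(N) = -φ(N); (iii) Δ_k(N) = Σ_{i=1}^{q^m-1, gcd(N, i-k)=1} χ_{q^m}(α^i), where the sum is over those i ∈ {1, ..., q^m - 1} with gcd(N, i - k) = 1. -/
open scoped BigOperators
open scoped Classical

/-!
The element `α ^ i` lies in the cyclotomic class `α ^ k ⟨α ^ d⟩` exactly when `d ∣ i - k`, so
Möbius inversion over the divisors `d ∣ N` collapses `Δ_k(N)` to the sum of `χ(α ^ i)` over the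
exponents `1 ≤ i ≤ q ^ m - 1` with `gcd(N, i - k) = 1`; this is (iii). The condition depends only
on `k mod N`, which gives (i). For (ii), exchanging the sums counts every `i` exactly `φ(N)` times,
and `∑_{x ≠ 0} χ(x) = -1` because `χ` is a nontrivial additive character.
-/

open Finset
open scoped Nat ArithmeticFunction.Moebius

lemma sum_units_eq_sum_sub {G₀ M : Type*} [GroupWithZero G₀] [Fintype G₀] [AddCommGroup M]
    (f : G₀ → M) : ∑ x : G₀ˣ, f x = ∑ z, f z - f 0 := by
  rw [← sum_erase_eq_sub (mem_univ 0)]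
  exact sum_bij' (fun x _ => (x : G₀)) (fun z hz => Units.mk0 z (ne_of_mem_erase hz))
    (fun x _ => mem_erase.mpr ⟨x.ne_zero, mem_univ _⟩) (fun _ _ => mem_univ _)
    (fun _ _ => Units.mk0_val _ _) (fun _ _ => rfl) (fun _ _ => rfl)

section CanonicalCharacter

variable (p : ℕ) (F : Type) [Field F] [Fintype F] [CharP F p]

noncomputable def canAddChar [NeZero p] : AddChar F ℂ :=
  letI := ZMod.algebra F p
  ZMod.stdAddChar.compAddMonoidHom (Algebra.trace (ZMod p) F).toAddMonoidHom

lemma canAddChar_apply [NeZero p] (z : F) : canAddChar p F z = canChar p F z := by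
  rw [canAddChar, AddChar.compAddMonoidHom_apply, ZMod.stdAddChar_apply, ZMod.toCircle_apply]
  rfl

lemma canAddChar_ne_one [NeZero p] : canAddChar p F ≠ 1 := by
  obtain rfl := ringChar.eq F p
  let := ZMod.algebra F (ringChar F)
  obtain ⟨b, hb⟩ := FiniteField.trace_to_zmod_nondegenerate F (one_ne_zero (α := F))
  rw [one_mul] at hb
  refine AddChar.ne_one_iff.mpr ⟨b, fun h => hb ?_⟩
  rw [← ZMod.injective_stdAddChar.eq_iff, AddChar.map_zero_eq_one]
  exact h

lemma sum_canChar : ∑ z : F, canChar p F z = 0 := by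
  have : NeZero p := ⟨(CharP.char_is_prime F p).ne_zero⟩
  simp_rw [← canAddChar_apply]
  exact AddChar.sum_eq_zero_of_ne_one (canAddChar_ne_one p F)

lemma canChar_zero : canChar p F 0 = 1 := by
  simp [canChar]

lemma sum_units_canChar : ∑ x : Fˣ, canChar p F x = -1 := by
  rw [sum_units_eq_sum_sub, sum_canChar, canChar_zero, zero_sub]

end CanonicalCharacter

lemma sum_Icc_one_eq_sum_range {M : Type*} [AddCommMonoid M] {g : ℕ → M} {n : ℕ}
    (h : g n = g 0) : ∑ i ∈ Icc 1 n, g i = ∑ i ∈ range n, g i := by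
  rw [← Ico_add_one_right_eq_Icc, sum_Ico_eq_sum_range, Nat.add_sub_cancel]
  cases n with
  | zero => rfl
  | succ n => simp only [sum_range_succ, sum_range_succ' g, h, add_comm 1]

section CyclicGroup

variable {G : Type*} [Group G] [Fintype G] {α : G}

lemma sum_Icc_orderOf_pow {M : Type*} [AddCommMonoid M] (hα : ∀ x, x ∈ Subgroup.zpowers α)
    (f : G → M) : ∑ i ∈ Icc 1 (orderOf α), f (α ^ i) = ∑ x, f x := by
  rw [sum_Icc_one_eq_sum_range (by rw [pow_orderOf_eq_one, pow_zero]),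
    ← sum_image fun i hi j hj h =>
      pow_injOn_Iio_orderOf (by simpa using hi) (by simpa using hj) h,
    image_range_orderOf]
  congr
  ext x
  simpa using hα x

lemma exists_pow_eq_zpow_mul_pow_iff {d : ℕ} (hd : d ∣ orderOf α) (k : ℤ) (i : ℕ) :
    (∃ j : ℕ, α ^ i = α ^ k * (α ^ d) ^ j) ↔ (d : ℤ) ∣ i - k := by
  have hpow : ∀ j : ℕ, α ^ k * (α ^ d) ^ j = α ^ (k + d * j) := by
    intro j
    rw [zpow_add, ← pow_mul, ← zpow_natCast, Nat.cast_mul]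
  have hiff : ∀ j : ℕ, α ^ i = α ^ k * (α ^ d) ^ j ↔ (orderOf α : ℤ) ∣ i - k - d * j := by
    intro j
    rw [hpow, ← zpow_natCast, zpow_eq_zpow_iff_modEq, Int.modEq_comm, Int.modEq_iff_dvd,
      sub_sub]
  have hd' : (d : ℤ) ∣ orderOf α := Int.natCast_dvd_natCast.mpr hd
  simp_rw [hiff]
  constructor
  · rintro ⟨j, hj⟩
    simpa using dvd_add (hd'.trans hj) (dvd_mul_right (d : ℤ) j)
  · rintro ⟨t, ht⟩
    have hn : (orderOf α : ℤ) ≠ 0 := by exact_mod_cast (orderOf_pos α).ne'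
    refine ⟨(t % orderOf α).toNat, ?_⟩
    rw [Int.toNat_of_nonneg (Int.emod_nonneg t hn), ht, ← mul_sub, Int.emod_def, sub_sub_cancel]
    exact dvd_mul_of_dvd_right (dvd_mul_right _ _) _

end CyclicGroup

lemma sum_divisors_moebius {R : Type*} [Ring R] (n : ℕ) :
    ∑ d ∈ n.divisors, (μ d : R) = if n = 1 then 1 else 0 := by
  have h := congrArg (· n) (ArithmeticFunction.coe_moebius_mul_coe_zeta (R := R))
  simp only [ArithmeticFunction.coe_mul_zeta_apply, ArithmeticFunction.intCoe_apply,
    ArithmeticFunction.one_apply] at h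
  exact h

lemma filter_divisors_dvd_eq_divisors_gcd {N : ℕ} (hN : N ≠ 0) (x : ℤ) :
    N.divisors.filter (fun d : ℕ => (d : ℤ) ∣ x) = (Int.gcd N x).divisors := by
  ext d
  simp [Int.dvd_gcd_iff, Int.gcd_eq_zero_iff, Int.natCast_dvd_natCast, hN]

lemma card_filter_range_gcd_sub_eq_totient (N : ℕ) (z : ℤ) :
    ((range N).filter fun j : ℕ => Int.gcd N (z - j) = 1).card = φ N := by
  rcases N.eq_zero_or_pos with rfl | hN
  · simp
  have hN' : (0 : ℤ) < N := by exact_mod_cast hN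
  -- `j ↦ (z - j) mod N` is an involution of `range N`
  set f : ℕ → ℕ := fun j => ((z - j) % N).toNat
  have hf : ∀ j : ℕ, (f j : ℤ) = (z - j) % N := fun j =>
    Int.toNat_of_nonneg (Int.emod_nonneg _ hN'.ne')
  have hf_lt : ∀ j : ℕ, f j < N := fun j => by
    have := Int.emod_lt_of_pos (z - j) hN'
    have := hf j
    omega
  have hf_gcd : ∀ j : ℕ, Int.gcd N (z - j) = N.gcd (f j) := fun j => by
    rw [← Int.gcd_natCast_natCast, hf, Int.emod_def, Int.gcd_sub_mul_left_right]
  have hff : ∀ j : ℕ, j < N → f (f j) = j := fun j hj => by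
    zify
    rw [hf, hf, Int.sub_emod, Int.emod_emod_of_dvd _ dvd_rfl, ← Int.sub_emod, sub_sub_cancel,
      Int.emod_eq_of_lt (by positivity) (by omega)]
  simp_rw [Nat.totient_eq_card_coprime, hf_gcd]
  refine card_nbij' f f (fun j hj => ?_) (fun j hj => ?_) (fun j hj => hff j ?_)
    (fun j hj => hff j ?_) <;> simp only [coe_filter, mem_range, Set.mem_ofPred_eq] at hj ⊢
  · exact ⟨hf_lt j, hj.2⟩
  · exact ⟨hf_lt j, by rw [hff j hj.1]; exact hj.2⟩
  · exact hj.1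
  · exact hj.1

section GaussPeriod

variable {p : ℕ} {L : Type} [Field L] [Fintype L] [CharP L p] {α : Lˣ}

lemma gaussPeriod_eq_sum_Icc (hα : ∀ x, x ∈ Subgroup.zpowers α) {d : ℕ} (hd : d ∣ orderOf α)
    (k : ℤ) :
    gaussPeriod p L α d k =
      ∑ i ∈ (Icc 1 (orderOf α)).filter (fun i : ℕ => (d : ℤ) ∣ i - k),
        canChar p L ((α ^ i : Lˣ) : L) := by
  rw [gaussPeriod, sum_filter, sum_filter, ← sum_Icc_orderOf_pow hα]
  simp only [exists_pow_eq_zpow_mul_pow_iff hd]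

lemma DeltaSum_eq_sum_Icc (hα : ∀ x, x ∈ Subgroup.zpowers α) {N : ℕ} (hN : N ∣ orderOf α)
    (k : ℤ) :
    DeltaSum p L α N k =
      ∑ i ∈ (Icc 1 (orderOf α)).filter (fun i : ℕ => Int.gcd N (i - k) = 1),
        canChar p L ((α ^ i : Lˣ) : L) := by
  have hN0 : N ≠ 0 := by
    rintro rfl
    exact (orderOf_pos α).ne' (zero_dvd_iff.mp hN)
  calc DeltaSum p L α N k
      = ∑ d ∈ N.divisors, ∑ i ∈ Icc 1 (orderOf α),
          if (d : ℤ) ∣ i - k then (μ d : ℂ) * canChar p L ((α ^ i : Lˣ) : L) else 0 := by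
        refine sum_congr rfl fun d hd => ?_
        rw [gaussPeriod_eq_sum_Icc hα ((Nat.dvd_of_mem_divisors hd).trans hN), mul_sum,
          sum_filter]
    _ = ∑ i ∈ Icc 1 (orderOf α),
          (∑ d ∈ N.divisors.filter (fun d : ℕ => (d : ℤ) ∣ i - k), (μ d : ℂ)) *
            canChar p L ((α ^ i : Lˣ) : L) := by
        rw [sum_comm]
        simp only [sum_mul, sum_filter, ite_mul, zero_mul]
    _ = _ := by
        simp only [filter_divisors_dvd_eq_divisors_gcd hN0, sum_divisors_moebius, ite_mul,
          one_mul, zero_mul, sum_filter]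

lemma DeltaSum_add_mul (hα : ∀ x, x ∈ Subgroup.zpowers α) {N : ℕ} (hN : N ∣ orderOf α)
    (k t : ℤ) : DeltaSum p L α N (k + N * t) = DeltaSum p L α N k := by
  simp only [DeltaSum_eq_sum_Icc hα hN, ← sub_sub, Int.gcd_sub_mul_left_right]

lemma sum_range_DeltaSum (hα : ∀ x, x ∈ Subgroup.zpowers α) {N : ℕ} (hN : N ∣ orderOf α) :
    ∑ j ∈ range N, DeltaSum p L α N j = -(φ N : ℂ) := by
  calc ∑ j ∈ range N, DeltaSum p L α N j
      = ∑ i ∈ Icc 1 (orderOf α),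
          ((range N).filter fun j : ℕ => Int.gcd N (i - j) = 1).card •
            canChar p L ((α ^ i : Lˣ) : L) := by
        simp only [DeltaSum_eq_sum_Icc hα hN, sum_filter]
        rw [sum_comm]
        simp only [← sum_filter, sum_const]
    _ = φ N * ∑ x : Lˣ, canChar p L x := by
        simp only [card_filter_range_gcd_sub_eq_totient, nsmul_eq_mul, ← mul_sum,
          sum_Icc_orderOf_pow hα fun x : Lˣ => canChar p L x]
    _ = -(φ N : ℂ) := by
        rw [sum_units_canChar, mul_neg_one]

end GaussPeriod

theorem stmt_12_general (p m q N : ℕ) (k : ℤ)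
    (L : Type) [Field L] [Fintype L] [CharP L p] (hL : Fintype.card L = q ^ m)
    (α : Lˣ) (hα : ∀ x : Lˣ, x ∈ Subgroup.zpowers α)
    (hN : N ∣ q ^ m - 1) :
    DeltaSum p L α N ((N : ℤ) * k) = DeltaSum p L α N 0 ∧
    (∑ i ∈ Finset.range N, DeltaSum p L α N (i : ℤ)) = -(Nat.totient N : ℂ) ∧
    DeltaSum p L α N k =
      ∑ i ∈ (Finset.Icc 1 (q ^ m - 1)).filter
          (fun i => Int.gcd (N : ℤ) ((i : ℤ) - k) = 1),
        canChar p L ((α ^ i : Lˣ) : L) := by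
  have hord : orderOf α = q ^ m - 1 := by
    rw [orderOf_eq_card_of_forall_mem_zpowers hα, Nat.card_units, Nat.card_eq_fintype_card, hL]
  rw [← hord] at hN ⊢
  refine ⟨by simpa using DeltaSum_add_mul hα hN 0 k, sum_range_DeltaSum hα hN, ?_⟩
  rw [DeltaSum_eq_sum_Icc hα hN]
  -- in the statement `i` ranges over the image of `Icc 1 (q ^ m - 1)` in `ℤ`
  simp only [Finset.pure_def, Finset.bind_def, Finset.sup_singleton_apply, filter_image,
    sum_image fun _ _ _ _ h => Nat.cast_injective h, zpow_natCast]

/-- basic identities for `Δ_k(N)`. -/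
theorem stmt_12 (p s m q N : ℕ) (k : ℤ) [Fact p.Prime] (hs : 0 < s) (hm : 0 < m)
    (hq : q = p ^ s)
    (L : Type) [Field L] [Fintype L] [CharP L p] (hL : Fintype.card L = q ^ m)
    (α : Lˣ) (hα : ∀ x : Lˣ, x ∈ Subgroup.zpowers α)
    (hN : N ∣ q ^ m - 1) :
    DeltaSum p L α N ((N : ℤ) * k) = DeltaSum p L α N 0 ∧
    (∑ i ∈ Finset.range N, DeltaSum p L α N (i : ℤ)) = -(Nat.totient N : ℂ) ∧
    DeltaSum p L α N k =
      ∑ i ∈ (Finset.Icc 1 (q ^ m - 1)).filter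
          (fun i => Int.gcd (N : ℤ) ((i : ℤ) - k) = 1),
        canChar p L ((α ^ i : Lˣ) : L) :=
  stmt_12_general p m q N k L hL α hα hN
end

section
/- Let q be a power of a prime, m a positive integer, N a positive divisor of q^m - 1, k an integer, and K_Q the largest divisor of N that is coprime to Q = (q^m - 1)/(q - 1). Then f_k(N, 0, Δ) = (q - 1)·(φ(K_Q)/K_Q)·Δ_k(gcd(Q, N)). -/
open scoped BigOperators
open scoped Classical

/-
For `c = 0` every character value in `f_k(N, 0, Δ)` is `1`, so after expanding `Δ` one has to
sum, for each `d ∣ N`, the Gaussian periods `η_{Qi+k}^{(d)}` over `i < q - 1`. In the cyclic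
group `L^*`, put `S = ⟨α^Q⟩ = F_q^*` and `H = ⟨α^d⟩`; the cosets `α^k s H` with `s ∈ S` cover
`α^k S H = α^k ⟨α^{gcd(Q,d)}⟩` exactly `|S ∩ H| = (q-1) gcd(Q,d) / d` times, so the inner sum
is `(q-1) (gcd(Q,d)/d) η_k^{(gcd(Q,d))}`.
In the remaining Möbius sum only squarefree `d` matter, and these depend only on the primes of
`N`. Every prime of `N` divides `Q` or, by maximality, `K_Q`, so `N` may be replaced by
`gcd(Q,N) · K_Q`, a product of coprime factors. Writing `d = a b` accordingly gives
`gcd(Q,d) = a`, and the sum splits as `Δ_k(gcd(Q,N)) · ∑_{b ∣ K_Q} μ(b)/b`, where the last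
factor is `φ(K_Q)/K_Q`.
-/

open Finset

theorem Subgroup.sum_sum_mul_eq_card_inf_smul_sum_sup {G M : Type*} [CommGroup G] [Fintype G]
    [AddCommMonoid M] (S H : Subgroup G) (f : G → M) :
    ∑ s : S, ∑ h : H, f (s * h) = Nat.card ↥(S ⊓ H) • ∑ y : ↥(S ⊔ H), f y := by
  let φ : S × H →* G := S.subtype.comp (MonoidHom.fst S H) * H.subtype.comp (MonoidHom.snd S H)
  have hrange : ∀ y, y ∈ univ.image φ ↔ y ∈ S ⊔ H := by
    simp [φ, Subgroup.mem_sup]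
  have hkernel : #{x | φ x = 1} = Nat.card ↥(S ⊓ H) := by
    change #{x : S × H | (x.1 : G) * x.2 = 1} = _
    rw [Nat.card_eq_fintype_card, ← card_univ]
    refine card_bij' (fun x hx => ⟨x.1, x.1.2, ?_⟩)
      (fun s _ => (⟨s, s.2.1⟩, ⟨s⁻¹, H.inv_mem s.2.2⟩)) ?_ ?_ ?_ (fun _ _ => rfl)
    · rw [eq_inv_of_mul_eq_one_left (mem_filter.mp hx).2]
      exact H.inv_mem x.2.2
    · simp
    · simp
    · intro x hx
      ext
      · rfl
      · simp [eq_inv_of_mul_eq_one_right (mem_filter.mp hx).2]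
  calc ∑ s : S, ∑ h : H, f (s * h) = ∑ x : S × H, f (φ x) := (Fintype.sum_prod_type' _).symm
    _ = ∑ y ∈ univ.image φ, #{x | φ x = y} • f y := sum_comp f φ
    _ = ∑ y ∈ univ.image φ, Nat.card ↥(S ⊓ H) • f y := by
        refine sum_congr rfl fun y hy => ?_
        rw [← hkernel, MonoidHom.card_fiber_eq_of_mem_range φ (by simpa using hy) ⟨1, map_one φ⟩]
    _ = _ := by rw [← smul_sum, sum_subtype _ hrange]

theorem Subgroup.card_inf_mul_card_sup {G : Type*} [CommGroup G] [Fintype G] (S H : Subgroup G) :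
    Nat.card ↥(S ⊓ H) * Nat.card ↥(S ⊔ H) = Nat.card S * Nat.card H := by
  have h := S.sum_sum_mul_eq_card_inf_smul_sum_sup H (fun _ => (1 : ℕ))
  simp only [sum_const, card_univ, smul_eq_mul, mul_one] at h
  simp only [Nat.card_eq_fintype_card, h]

theorem Subgroup.zpowers_pow_sup_zpowers_pow {G : Type*} [Group G] (a : G) (m n : ℕ) :
    zpowers (a ^ m) ⊔ zpowers (a ^ n) = zpowers (a ^ m.gcd n) := by
  refine le_antisymm (sup_le ?_ ?_) ?_
  · obtain ⟨c, hc⟩ := Nat.gcd_dvd_left m n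
    exact zpowers_le.mpr ⟨c, show (_ : G) ^ (c : ℤ) = _ by rw [zpow_natCast, ← pow_mul, ← hc]⟩
  · obtain ⟨c, hc⟩ := Nat.gcd_dvd_right m n
    exact zpowers_le.mpr ⟨c, show (_ : G) ^ (c : ℤ) = _ by rw [zpow_natCast, ← pow_mul, ← hc]⟩
  · rw [zpowers_le, ← zpow_natCast a (m.gcd n), Nat.gcd_eq_gcd_ab, zpow_add, zpow_mul, zpow_mul]
    exact mul_mem (mem_sup_left (zpow_mem (by simp) _)) (mem_sup_right (zpow_mem (by simp) _))

theorem sum_range_orderOf_pow_eq_sum_zpowers {G M : Type*} [Group G] [Fintype G]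
    [AddCommMonoid M] (x : G) (f : G → M) :
    ∑ i ∈ range (orderOf x), f (x ^ i) = ∑ y : Subgroup.zpowers x, f y := by
  rw [Finset.sum_range (fun i => f (x ^ i))]
  exact Fintype.sum_equiv (finEquivZPowers (isOfFinOrder_of_finite x)) _ _ fun _ => rfl

theorem Nat.sum_divisors_moebius_mul_eq_of_primeFactors_eq {R : Type*} [CommRing R] {m n : ℕ}
    (hm : m ≠ 0) (hn : n ≠ 0) (h : m.primeFactors = n.primeFactors) (f : ℕ → R) :
    ∑ d ∈ m.divisors, (ArithmeticFunction.moebius d : R) * f d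
      = ∑ d ∈ n.divisors, (ArithmeticFunction.moebius d : R) * f d := by
  have hsquarefree : ∀ r : ℕ, r ≠ 0 → ∑ d ∈ r.divisors, (ArithmeticFunction.moebius d : R) * f d
      = ∑ s ∈ r.primeFactors.powerset,
          (ArithmeticFunction.moebius s.val.prod : R) * f s.val.prod := by
    intro r hr
    rw [← sum_filter_of_ne (p := Squarefree), Nat.sum_divisors_filter_squarefree hr,
      Nat.factors_eq]
    · rfl
    · intro d _ hd
      by_contra hsq
      simp [ArithmeticFunction.moebius_eq_zero_of_not_squarefree hsq] at hd
  rw [hsquarefree m hm, hsquarefree n hn, h]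

theorem Nat.Coprime.sum_divisors_mul_eq_sum_sum {M : Type*} [AddCommMonoid M] {m n : ℕ}
    (hmn : m.Coprime n) (f : ℕ → M) :
    ∑ d ∈ (m * n).divisors, f d = ∑ a ∈ m.divisors, ∑ b ∈ n.divisors, f (a * b) := by
  rw [hmn.divisors_mul, sum_map, ← sum_product' (f := fun a b => f (a * b))]
  exact sum_attach _ (fun x : ℕ × ℕ => f (x.1 * x.2))

theorem Nat.sum_divisors_moebius_div_eq_totient_div {K : Type*} [Field K] [CharZero K] (n : ℕ) :
    ∑ d ∈ n.divisors, (ArithmeticFunction.moebius d : K) / d = n.totient / n := by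
  rcases n.eq_zero_or_pos with rfl | hn
  · simp
  have hinv := (ArithmeticFunction.sum_eq_iff_sum_mul_moebius_eq (R := K)
    (f := fun x => (x.totient : K)) (g := fun x => (x : K))).mp
      (fun n _ => by exact_mod_cast n.sum_totient) n hn
  rw [Nat.sum_divisorsAntidiagonal (fun a b => (ArithmeticFunction.moebius a : K) * b)] at hinv
  have hn' : (n : K) ≠ 0 := Nat.cast_ne_zero.mpr hn.ne'
  rw [eq_div_iff hn', sum_mul, ← hinv]
  refine sum_congr rfl fun d hd => ?_
  have hd0 : (d : K) ≠ 0 := Nat.cast_ne_zero.mpr (Nat.pos_of_mem_divisors hd).ne'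
  rw [Nat.cast_div (Nat.dvd_of_mem_divisors hd) hd0]
  ring

theorem Nat.dvd_of_isGreatest_coprime_dvd {N Q K d : ℕ} (hN : N ≠ 0)
    (hK : IsGreatest {e | e ∣ N ∧ e.Coprime Q} K) (hd : d ∣ N) (hdQ : d.Coprime Q) : d ∣ K := by
  obtain ⟨⟨hKN, hKQ⟩, hmax⟩ := hK
  have hlcm : d.lcm K ≤ K :=
    hmax ⟨Nat.lcm_dvd hd hKN, (hdQ.mul_left hKQ).coprime_dvd_left (Nat.lcm_dvd_mul d K)⟩
  have hlcm_pos : 0 < d.lcm K := Nat.pos_of_ne_zero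
    (Nat.lcm_ne_zero (ne_zero_of_dvd_ne_zero hN hd) (ne_zero_of_dvd_ne_zero hN hKN))
  rw [← le_antisymm hlcm (Nat.le_of_dvd hlcm_pos (Nat.dvd_lcm_right d K))]
  exact Nat.dvd_lcm_left d K

theorem Nat.primeFactors_gcd_mul_eq {N Q K : ℕ} (hN : N ≠ 0)
    (hK : IsGreatest {e | e ∣ N ∧ e.Coprime Q} K) :
    (Q.gcd N * K).primeFactors = N.primeFactors := by
  have hKN : K ∣ N := hK.1.1
  rw [Nat.primeFactors_mul (Nat.gcd_ne_zero_right hN) (ne_zero_of_dvd_ne_zero hN hKN)]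
  ext ℓ
  simp only [Finset.mem_union, Nat.mem_primeFactors]
  constructor
  · rintro (⟨hℓ, hℓg, -⟩ | ⟨hℓ, hℓK, -⟩)
    · exact ⟨hℓ, hℓg.trans (Nat.gcd_dvd_right Q N), hN⟩
    · exact ⟨hℓ, hℓK.trans hKN, hN⟩
  · rintro ⟨hℓ, hℓN, -⟩
    by_cases hℓQ : ℓ ∣ Q
    · exact Or.inl ⟨hℓ, Nat.dvd_gcd hℓQ hℓN, Nat.gcd_ne_zero_right hN⟩
    · exact Or.inr ⟨hℓ, Nat.dvd_of_isGreatest_coprime_dvd hN hK hℓN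
        ((Nat.Prime.coprime_iff_not_dvd hℓ).mpr hℓQ), ne_zero_of_dvd_ne_zero hN hKN⟩

theorem Nat.sum_divisors_moebius_mul_gcd_div {R : Type*} [Field R] [CharZero R] {N Q K : ℕ}
    (hN : N ≠ 0) (hK : IsGreatest {e | e ∣ N ∧ e.Coprime Q} K) (T : ℕ → R) :
    ∑ d ∈ N.divisors, (ArithmeticFunction.moebius d : R) * (Q.gcd d / d * T (Q.gcd d))
      = K.totient / K * ∑ a ∈ (Q.gcd N).divisors, (ArithmeticFunction.moebius a : R) * T a := by
  have hKQ : K.Coprime Q := hK.1.2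
  have hcop : (Q.gcd N).Coprime K := (hKQ.coprime_dvd_right (Nat.gcd_dvd_left Q N)).symm
  rw [Nat.sum_divisors_moebius_mul_eq_of_primeFactors_eq hN
      (mul_ne_zero (Nat.gcd_ne_zero_right hN) (ne_zero_of_dvd_ne_zero hN hK.1.1))
      (Nat.primeFactors_gcd_mul_eq hN hK).symm,
    hcop.sum_divisors_mul_eq_sum_sum, mul_comm (K.totient / K : R),
    ← Nat.sum_divisors_moebius_div_eq_totient_div, sum_mul_sum]
  refine sum_congr rfl fun a ha => sum_congr rfl fun b hb => ?_
  have haQ : a ∣ Q := (Nat.dvd_of_mem_divisors ha).trans (Nat.gcd_dvd_left Q N)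
  have hbQ : b.Coprime Q := hKQ.coprime_dvd_left (Nat.dvd_of_mem_divisors hb)
  have hab : a.Coprime b := (hbQ.coprime_dvd_right haQ).symm
  have hgcd : Q.gcd (a * b) = a := by
    rw [Nat.gcd_comm, hbQ.gcd_mul_right_cancel, Nat.gcd_eq_left haQ]
  have ha0 : (a : R) ≠ 0 := Nat.cast_ne_zero.mpr (Nat.pos_of_mem_divisors ha).ne'
  rw [hgcd, ArithmeticFunction.isMultiplicative_moebius.map_mul_of_coprime hab]
  push_cast
  field_simp

theorem gaussPeriod_eq_sum_zpowers (p : ℕ) (L : Type) [Field L] [Fintype L] [CharP L p]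
    (α : Lˣ) (d : ℕ) (k : ℤ) :
    gaussPeriod p L α d k = ∑ h : Subgroup.zpowers (α ^ d), canChar p L ↑(α ^ k * h) := by
  have hcoset : univ.filter (fun x : Lˣ => ∃ i : ℕ, x = α ^ k * (α ^ d) ^ i)
      = univ.map ⟨fun h : Subgroup.zpowers (α ^ d) => α ^ k * h,
          fun _ _ h => Subtype.ext (mul_left_cancel h)⟩ := by
    ext x
    simp only [mem_filter, mem_univ, true_and, mem_map]
    constructor
    · rintro ⟨i, rfl⟩
      exact ⟨⟨_, mem_powers_iff_mem_zpowers.mp ⟨i, rfl⟩⟩, rfl⟩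
    · rintro ⟨⟨h, hh⟩, rfl⟩
      obtain ⟨i, rfl⟩ := mem_powers_iff_mem_zpowers.mpr hh
      exact ⟨i, rfl⟩
  rw [gaussPeriod, hcoset, sum_map]
  rfl

theorem sum_range_gaussPeriod (p : ℕ) (L : Type) [Field L] [Fintype L] [CharP L p]
    (α : Lˣ) {Q w d : ℕ} (hα : orderOf α = Q * w) (hd : d ∣ Q * w) (k : ℤ) :
    ∑ i ∈ range w, gaussPeriod p L α d ((Q * i : ℕ) + k)
      = (w * Q.gcd d / d : ℂ) * gaussPeriod p L α (Q.gcd d) k := by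
  set S := Subgroup.zpowers (α ^ Q)
  set H := Subgroup.zpowers (α ^ d)
  have hQw : Q * w ≠ 0 := hα ▸ (orderOf_pos α).ne'
  have hQ : Q ≠ 0 := left_ne_zero_of_mul hQw
  have hd0 : d ≠ 0 := ne_zero_of_dvd_ne_zero hQw hd
  have hg : Q.gcd d ∣ Q * w := (Nat.gcd_dvd_right Q d).trans hd
  have hS : Nat.card S = w := by
    rw [Nat.card_zpowers, orderOf_pow' α hQ, hα, Nat.gcd_mul_right_left,
      Nat.mul_div_cancel_left _ (Nat.pos_of_ne_zero hQ)]
  have hcard_pow : ∀ e, e ∣ Q * w → Nat.card (Subgroup.zpowers (α ^ e)) = Q * w / e := by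
    intro e he
    rw [Nat.card_zpowers, orderOf_pow, hα, Nat.gcd_eq_right he]
  have hsup : S ⊔ H = Subgroup.zpowers (α ^ Q.gcd d) :=
    Subgroup.zpowers_pow_sup_zpowers_pow α Q d
  have hinf : (Nat.card ↥(S ⊓ H) : ℂ) = w * Q.gcd d / d := by
    have h := S.card_inf_mul_card_sup H
    rw [hsup, hS, hcard_pow d hd, hcard_pow _ hg] at h
    have hg0 : (Q.gcd d : ℂ) ≠ 0 := Nat.cast_ne_zero.mpr (Nat.gcd_ne_zero_left hQ)
    have hd0' : (d : ℂ) ≠ 0 := Nat.cast_ne_zero.mpr hd0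
    have hw' : (w : ℂ) ≠ 0 := Nat.cast_ne_zero.mpr (right_ne_zero_of_mul hQw)
    have h' := congrArg (Nat.cast : ℕ → ℂ) h
    push_cast [Nat.cast_div hd hd0', Nat.cast_div hg hg0] at h'
    rw [eq_div_iff hd0']
    field_simp at h'
    exact h'
  calc ∑ i ∈ range w, gaussPeriod p L α d ((Q * i : ℕ) + k)
      = ∑ i ∈ range (orderOf (α ^ Q)), ∑ h : H, canChar p L ↑(α ^ k * ((α ^ Q) ^ i * h)) := by
        rw [← Nat.card_zpowers, hS]
        refine sum_congr rfl fun i _ => ?_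
        rw [gaussPeriod_eq_sum_zpowers]
        refine sum_congr rfl fun h _ => ?_
        rw [zpow_add, zpow_natCast, pow_mul, mul_right_comm, mul_comm]
    _ = ∑ s : S, ∑ h : H, canChar p L ↑(α ^ k * (s * h)) :=
        sum_range_orderOf_pow_eq_sum_zpowers (α ^ Q)
          (fun s => ∑ h : H, canChar p L ↑(α ^ k * (s * h)))
    _ = Nat.card ↥(S ⊓ H) • ∑ y : ↥(S ⊔ H), canChar p L ↑(α ^ k * y) :=
        S.sum_sum_mul_eq_card_inf_smul_sum_sup H (fun y => canChar p L ↑(α ^ k * y))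
    _ = _ := by
        rw [nsmul_eq_mul, hinf, gaussPeriod_eq_sum_zpowers, hsup]

theorem sum_range_DeltaSum_s14 (p : ℕ) (L : Type) [Field L] [Fintype L] [CharP L p]
    (α : Lˣ) {Q w N : ℕ} (hα : orderOf α = Q * w) (hN : N ∣ Q * w) (k : ℤ) :
    ∑ i ∈ range w, DeltaSum p L α N ((Q * i : ℕ) + k)
      = w * ∑ d ∈ N.divisors, (ArithmeticFunction.moebius d : ℂ) *
          (Q.gcd d / d * gaussPeriod p L α (Q.gcd d) k) := by
  simp only [DeltaSum]
  rw [sum_comm, mul_sum]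
  refine sum_congr rfl fun d hd => ?_
  rw [← mul_sum, sum_range_gaussPeriod p L α hα ((Nat.dvd_of_mem_divisors hd).trans hN)]
  ring

theorem fsum_zero (p : ℕ) (K L : Type) [Field K] [Fintype K] [CharP K p]
    [Field L] [Fintype L] [CharP L p] (α : Lˣ) (β : K) (q Q N : ℕ) (k : ℤ) :
    fsum p K L α β q Q N 0 k = ∑ i ∈ range (q - 1), DeltaSum p L α N ((Q * i : ℕ) + k) := by
  simp [fsum, canChar]

theorem stmt_14_general (p m q Q N KQ : ℕ) (k : ℤ)
    (hQ : Q = (q ^ m - 1) / (q - 1))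
    (K L : Type) [Field K] [Fintype K] [CharP K p] [Field L] [Fintype L] [CharP L p]
    (hL : Fintype.card L = q ^ m)
    (α : Lˣ) (hα : ∀ x : Lˣ, x ∈ Subgroup.zpowers α)
    (β : K)
    (hN : N ∣ q ^ m - 1)
    (hKQ1 : KQ ∣ N) (hKQ2 : Nat.Coprime KQ Q)
    (hKQmax : ∀ d : ℕ, d ∣ N → Nat.Coprime d Q → d ≤ KQ) :
    fsum p K L α β q Q N (0 : K) k =
      ((q : ℂ) - 1) * ((Nat.totient KQ : ℂ) / (KQ : ℂ)) *
        DeltaSum p L α (Nat.gcd Q N) k := by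
  have hsplit : q ^ m - 1 = Q * (q - 1) := by
    rw [hQ, Nat.div_mul_cancel (by simpa using Nat.sub_dvd_pow_sub_pow q 1 m)]
  have hord : orderOf α = Q * (q - 1) := by
    rw [orderOf_eq_card_of_forall_mem_zpowers hα, Nat.card_units, Nat.card_eq_fintype_card, hL,
      hsplit]
  have hord0 : Q * (q - 1) ≠ 0 := hord ▸ (orderOf_pos α).ne'
  have hq : 1 ≤ q := by
    have := right_ne_zero_of_mul hord0
    omega
  have hKQ : IsGreatest {e | e ∣ N ∧ e.Coprime Q} KQ :=
    ⟨⟨hKQ1, hKQ2⟩, fun d hd => hKQmax d hd.1 hd.2⟩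
  rw [hsplit] at hN
  rw [fsum_zero, sum_range_DeltaSum_s14 p L α hord hN,
    Nat.sum_divisors_moebius_mul_gcd_div (ne_zero_of_dvd_ne_zero hord0 hN) hKQ
      (fun g => gaussPeriod p L α g k), DeltaSum,
    Nat.cast_sub hq, Nat.cast_one]
  ring

/-- `f_k(N, 0, Δ) = (q-1)(φ(K_Q)/K_Q)Δ_k(gcd(Q,N))`. -/
theorem stmt_14 (p s m q Q N KQ : ℕ) (k : ℤ) [Fact p.Prime] (hs : 0 < s) (hm : 0 < m)
    (hq : q = p ^ s) (hQ : Q = (q ^ m - 1) / (q - 1))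
    (K L : Type) [Field K] [Fintype K] [CharP K p] [Field L] [Fintype L] [CharP L p]
    [Algebra K L]
    (hK : Fintype.card K = q) (hL : Fintype.card L = q ^ m)
    (α : Lˣ) (hα : ∀ x : Lˣ, x ∈ Subgroup.zpowers α)
    (β : K) (hβ : algebraMap K L β = (α : L) ^ Q)
    (hN : N ∣ q ^ m - 1)
    (hKQ1 : KQ ∣ N) (hKQ2 : Nat.Coprime KQ Q)
    (hKQmax : ∀ d : ℕ, d ∣ N → Nat.Coprime d Q → d ≤ KQ) :
    fsum p K L α β q Q N (0 : K) k =
      ((q : ℂ) - 1) * ((Nat.totient KQ : ℂ) / (KQ : ℂ)) *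
        DeltaSum p L α (Nat.gcd Q N) k :=
  stmt_14_general p m q Q N KQ k hQ K L hL α hα β hN hKQ1 hKQ2 hKQmax
end
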